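/- arXiv:1811.08030 — 6 statements merged into one kernel-verified Lean document; each statement's English description precedes it below -/
import Mathlib

section
/- Let {v_1,…,v_n} ⊂ S^d be a spherical M-design, let A ∈ ℝ^{d+1}, r > 0, b̄ > 0, and C ∈ ℝ^{d+1}. Set x̄_i = A + r v_i, and let (x_i, b_i) be the center and curvature of the image of the sphere with center x̄_i and curvature b̄ under inversion in the unit sphere centered at C (assume no x̄_i satisfies |x̄_i - C| = 1/b̄, so all images are genuine spheres). Then for every polynomial F on ℝ^{d+1} of degree at most M, the average (1/n) ∑_i F(b_i x_i) equals the integral over v ∈ S^d of F(b(v) x(v)), where b(v), x(v) are the curvature and center of the inverted sphere centered at A + r v. In particular, this average depends only on A, r, b̄, C, F and not on the choice of M-design. -/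
/-!
If the image of the sphere of curvature `bb` centered at `y` under inversion in the unit sphere
about `C` is a genuine sphere, with curvature `b` and center `x`, then
`b • x = (bb * ‖y - C‖² - 1/bb) • C + bb • (y - C)`. For `y = A + r • w` with `‖w‖ = 1` the
coefficient `‖y - C‖²` is affine in `w`, so `F (b x)` coincides on the sphere with a polynomial
`G` in `w` of degree at most `deg F`, and the design property of `G` gives the claim. The
exceptional points, where the image is a hyperplane, lie on a hyperplane section of `S^d`; for
`d ≥ 1` this is a null set unless it is all of `S^d`, which the design points rule out. For
`d = 0` the sphere is two points, and every function on it is a polynomial of degree `≤ 1`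
(when `M = 0`, `F` is constant and there is nothing to prove).
-/

open MeasureTheory

/-- A spherical `M`-design on the unit sphere of `ℝ^D`: a finite point set on the sphere
over which every polynomial of degree at most `M` has the same average as over the
sphere. -/
def IsSphericalDesign (D M n : ℕ) (x : Fin n → EuclideanSpace ℝ (Fin D)) : Prop :=
  (∀ i, ‖x i‖ = 1) ∧
    ∀ F : MvPolynomial (Fin D) ℝ, F.totalDegree ≤ M →
      (1 / (n : ℝ)) * ∑ i, MvPolynomial.eval (x i) F
        = ⨍ v : Metric.sphere (0 : EuclideanSpace ℝ (Fin D)) 1,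
            MvPolynomial.eval (v : EuclideanSpace ℝ (Fin D)) F ∂(volume.toSphere)

open MvPolynomial Set Filter Topology RealInnerProductSpace

namespace MvPolynomial

theorem totalDegree_bind₁_le_mul {σ τ R : Type*} [CommSemiring R] (p : σ → MvPolynomial τ R)
    {k : ℕ} (hp : ∀ i, (p i).totalDegree ≤ k) (F : MvPolynomial σ R) :
    (bind₁ p F).totalDegree ≤ F.totalDegree * k := by
  conv_lhs => rw [F.as_sum, map_sum]
  refine (totalDegree_finsetSum _ _).trans (Finset.sup_le fun m hm => ?_)
  rw [bind₁_monomial]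
  refine (totalDegree_mul _ _).trans ?_
  rw [totalDegree_C, zero_add]
  refine (totalDegree_finsetProd _ _).trans ?_
  calc ∑ i ∈ m.support, (p i ^ m i).totalDegree ≤ ∑ i ∈ m.support, m i * k :=
        Finset.sum_le_sum fun i _ => (totalDegree_pow _ _).trans (Nat.mul_le_mul_left _ (hp i))
    _ = (m.sum fun _ e => e) * k := by rw [Finsupp.sum, Finset.sum_mul]
    _ ≤ F.totalDegree * k := Nat.mul_le_mul_right _ (le_totalDegree hm)

theorem exists_totalDegree_le_eval_eq_eval_add {R ι κ : Type*} [CommSemiring R] [Fintype ι]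
    (F : MvPolynomial κ R) (a : κ → R) (L : (ι → R) →ₗ[R] (κ → R)) :
    ∃ G : MvPolynomial ι R, G.totalDegree ≤ F.totalDegree ∧
      ∀ w, eval w G = eval (a + L w) F := by
  classical
  let p : κ → MvPolynomial ι R := fun j =>
    C (a j) + ∑ i, monomial (Finsupp.single i 1) (L (fun k => if i = k then 1 else 0) j)
  have hp : ∀ j, (p j).totalDegree ≤ 1 := fun j =>
    (totalDegree_add _ _).trans <| max_le (by simp) <|
      (totalDegree_finsetSum _ _).trans <| Finset.sup_le fun i _ =>
        (totalDegree_monomial_le _ _).trans (by simp)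
  refine ⟨bind₁ p F, (totalDegree_bind₁_le_mul p hp F).trans_eq (mul_one _), fun w => ?_⟩
  have hp_eval : (fun j => eval w (p j)) = a + L w := by
    funext j
    simp [p, L.pi_apply_eq_sum_univ w, eval_monomial, mul_comm]
  change eval₂Hom _ _ (bind₁ p F) = _
  rw [eval₂Hom_bind₁]
  exact congrArg (fun g => eval g F) hp_eval

theorem eval_eq_of_totalDegree_eq_zero {σ R : Type*} [CommSemiring R] {F : MvPolynomial σ R}
    (hF : F.totalDegree = 0) (x y : σ → R) : eval x F = eval y F := by
  rw [totalDegree_eq_zero_iff_eq_C.1 hF, eval_C, eval_C]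

end MvPolynomial

theorem EuclideanSpace.exists_totalDegree_le_eval_eq_eval_add {𝕜 ι κ : Type*} [RCLike 𝕜]
    [Fintype ι] (F : MvPolynomial κ 𝕜) (a : EuclideanSpace 𝕜 κ)
    (L : EuclideanSpace 𝕜 ι →ₗ[𝕜] EuclideanSpace 𝕜 κ) :
    ∃ G : MvPolynomial ι 𝕜, G.totalDegree ≤ F.totalDegree ∧
      ∀ w : EuclideanSpace 𝕜 ι, eval w G = eval (a + L w) F := by
  obtain ⟨G, hG, hGF⟩ := MvPolynomial.exists_totalDegree_le_eval_eq_eval_add F a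
    ((WithLp.linearEquiv 2 𝕜 (κ → 𝕜)).toLinearMap ∘ₗ L ∘ₗ
      (WithLp.linearEquiv 2 𝕜 (ι → 𝕜)).symm.toLinearMap)
  exact ⟨G, hG, fun w => hGF w⟩

theorem EuclideanSpace.exists_totalDegree_le_one_eval_eq_of_norm_eq_one
    (f : EuclideanSpace ℝ (Fin 1) → ℝ) :
    ∃ G : MvPolynomial (Fin 1) ℝ, G.totalDegree ≤ 1 ∧ ∀ w, ‖w‖ = 1 → f w = eval w G := by
  set e : EuclideanSpace ℝ (Fin 1) := EuclideanSpace.single 0 1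
  refine ⟨C ((f e + f (-e)) / 2) + C ((f e - f (-e)) / 2) * X 0, ?_, fun w hw => ?_⟩
  · refine (totalDegree_add _ _).trans (max_le (by simp) ((totalDegree_mul _ _).trans ?_))
    simp
  obtain rfl | rfl : w = e ∨ w = -e := by
    have : w 0 = 1 ∨ w 0 = -1 := by simpa [EuclideanSpace.norm_eq] using hw
    refine this.imp (fun h => ?_) (fun h => ?_) <;> ext i <;> fin_cases i <;> simp [e, h]
  all_goals simp [e]; ring

section Inversion

variable {E : Type*} [NormedAddCommGroup E]

/-- `b • x` for the image, of curvature `b` and center `x`, of the sphere of curvature `bb` centered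
at `y` under inversion in the unit sphere about `C`. If `‖y - C‖ = 1 / bb` the image is a
hyperplane, and `0⁻¹ = 0` makes the value `0`. -/
noncomputable def inversionCurvCenter [NormedSpace ℝ E] (C : E) (bb : ℝ) (y : E) : E :=
  (bb * ‖y - C‖ ^ 2 - 1 / bb) • (C + (‖y - C‖ ^ 2 - 1 / bb ^ 2)⁻¹ • (y - C))

theorem inversionCurvCenter_eq [NormedSpace ℝ E] {C y : E} {bb : ℝ} (hbb : bb ≠ 0)
    (hy : ‖y - C‖ ^ 2 ≠ 1 / bb ^ 2) :
    inversionCurvCenter C bb y = (bb * ‖y - C‖ ^ 2 - 1 / bb) • C + bb • (y - C) := by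
  have hb : bb * ‖y - C‖ ^ 2 - 1 / bb = bb * (‖y - C‖ ^ 2 - 1 / bb ^ 2) := by
    field_simp
  rw [inversionCurvCenter, smul_add, smul_smul, hb, mul_assoc,
    mul_inv_cancel₀ (sub_ne_zero.2 hy), mul_one]

variable [InnerProductSpace ℝ E]

theorem norm_add_smul_sub_sq {A C w : E} (r : ℝ) (hw : ‖w‖ = 1) :
    ‖A + r • w - C‖ ^ 2 = ‖A - C‖ ^ 2 + 2 * r * ⟪A - C, w⟫ + r ^ 2 := by
  rw [show A + r • w - C = (A - C) + r • w by abel, norm_add_sq_real, real_inner_smul_right,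
    norm_smul, hw, mul_one, Real.norm_eq_abs, sq_abs]
  ring

theorem inversionCurvCenter_add_smul {A C w : E} {r bb : ℝ} (hbb : bb ≠ 0) (hw : ‖w‖ = 1)
    (hreg : ‖A + r • w - C‖ ^ 2 ≠ 1 / bb ^ 2) :
    inversionCurvCenter C bb (A + r • w) =
      ((bb * (‖A - C‖ ^ 2 + r ^ 2) - 1 / bb) • C + bb • (A - C)) +
        ((2 * bb * r) • (innerₛₗ ℝ (A - C)).smulRight C + (bb * r) • LinearMap.id :
          E →ₗ[ℝ] E) w := by
  rw [inversionCurvCenter_eq hbb hreg, norm_add_smul_sub_sq r hw]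
  simp only [LinearMap.add_apply, LinearMap.smul_apply, LinearMap.smulRight_apply,
    innerₛₗ_apply_apply, LinearMap.id_apply]
  module

end Inversion

theorem exists_totalDegree_le_eval_inversionCurvCenter {ι : Type*} [Fintype ι]
    (F : MvPolynomial ι ℝ) (A C : EuclideanSpace ℝ ι) (r : ℝ) {bb : ℝ} (hbb : bb ≠ 0) :
    ∃ G : MvPolynomial ι ℝ, G.totalDegree ≤ F.totalDegree ∧
      ∀ w : EuclideanSpace ℝ ι, ‖w‖ = 1 → ‖A + r • w - C‖ ^ 2 ≠ 1 / bb ^ 2 →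
        eval (inversionCurvCenter C bb (A + r • w) : EuclideanSpace ℝ ι) F = eval w G := by
  obtain ⟨G, hG, hGF⟩ := EuclideanSpace.exists_totalDegree_le_eval_eq_eval_add F _
    ((2 * bb * r) • (innerₛₗ ℝ (A - C)).smulRight C + (bb * r) • LinearMap.id)
  exact ⟨G, hG, fun w hw hreg => by rw [hGF, inversionCurvCenter_add_smul hbb hw hreg]⟩

section Cone
variable {E : Type*} [NormedAddCommGroup E] [InnerProductSpace ℝ E]

theorem convex_setOf_mul_norm_le_inner (c : E) {τ : ℝ} (hτ : 0 ≤ τ) :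
    Convex ℝ {z : E | τ * ‖z‖ ≤ ⟪c, z⟫} := by
  have h := ((innerₛₗ ℝ c).concaveOn convex_univ).sub ((convexOn_norm convex_univ).smul hτ)
  simpa [sub_nonneg] using h.convex_ge 0

theorem setOf_inner_eq_mul_norm_subset_frontier (c : E) {τ : ℝ} (hτ : 0 ≤ τ) (hτc : τ < ‖c‖) :
    {z : E | ⟪c, z⟫ = τ * ‖z‖} ⊆ frontier {z : E | τ * ‖z‖ ≤ ⟪c, z⟫} := by
  intro z (hz : ⟪c, z⟫ = τ * ‖z‖)
  refine ⟨subset_closure hz.symm.le, ?_⟩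
  rw [← mem_compl_iff, ← closure_compl]
  have hlim : Tendsto (fun δ : ℝ => z - δ • c) (𝓝[>] 0) (𝓝 z) := by
    refine ((continuous_const.sub (continuous_id.smul continuous_const)).tendsto' 0 z ?_).mono_left
      nhdsWithin_le_nhds
    simp
  refine mem_closure_of_tendsto hlim (eventually_mem_nhdsWithin.mono fun δ (hδ : 0 < δ) => ?_)
  have hnorm : ‖z‖ - δ * ‖c‖ ≤ ‖z - δ • c‖ := by
    simpa [norm_smul, abs_of_pos hδ] using norm_sub_norm_le z (δ • c)
  have hinner : ⟪c, z - δ • c⟫ = ⟪c, z⟫ - δ * ‖c‖ ^ 2 := by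
    rw [inner_sub_right, real_inner_smul_right, real_inner_self_eq_norm_sq]
  simp only [mem_compl_iff, mem_ofPred_eq, not_le, hinner, hz]
  nlinarith [mul_le_mul_of_nonneg_left hnorm hτ, mul_lt_mul_of_pos_left hτc hδ, norm_nonneg c]

theorem setOf_inner_eq_mul_norm_subset_span {c : E} (hc : c ≠ 0) {τ : ℝ} (hτc : ‖c‖ ≤ |τ|) :
    {z : E | ⟪c, z⟫ = τ * ‖z‖} ⊆ Submodule.span ℝ {c} := by
  intro z (hz : ⟪c, z⟫ = τ * ‖z‖)
  rcases eq_or_ne z 0 with rfl | hz0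
  · exact Submodule.zero_mem _
  have hcs : ‖⟪c, z⟫‖ = ‖c‖ * ‖z‖ := by
    refine le_antisymm (norm_inner_le_norm c z) ?_
    rw [hz, norm_mul, Real.norm_eq_abs, norm_norm]
    gcongr
  obtain ⟨t, -, rfl⟩ := (norm_inner_eq_norm_iff hc hz0).1 hcs
  exact Submodule.smul_mem _ t (Submodule.mem_span_singleton_self c)

variable [FiniteDimensional ℝ E] [MeasurableSpace E] [BorelSpace E]
  (μ : Measure E) [μ.IsAddHaarMeasure]

theorem addHaar_setOf_inner_eq_mul_norm_of_abs_lt (c : E) {τ : ℝ} (hτc : |τ| < ‖c‖) :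
    μ {z : E | ⟪c, z⟫ = τ * ‖z‖} = 0 := by
  wlog hτ : 0 ≤ τ generalizing c τ
  · have h := this (-c) (by rwa [abs_neg, norm_neg]) (by linarith)
    simpa [inner_neg_left] using h
  exact measure_mono_null (setOf_inner_eq_mul_norm_subset_frontier c hτ
    ((le_abs_self τ).trans_lt hτc)) ((convex_setOf_mul_norm_le_inner c hτ).addHaar_frontier μ)

theorem addHaar_setOf_inner_eq_mul_norm (hE : 2 ≤ Module.finrank ℝ E) {c : E} (hc : c ≠ 0)
    (τ : ℝ) : μ {z : E | ⟪c, z⟫ = τ * ‖z‖} = 0 := by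
  rcases lt_or_ge |τ| ‖c‖ with hτc | hτc
  · exact addHaar_setOf_inner_eq_mul_norm_of_abs_lt μ c hτc
  refine measure_mono_null (setOf_inner_eq_mul_norm_subset_span hc hτc)
    (Measure.addHaar_submodule μ _ fun htop => ?_)
  have := finrank_span_singleton (K := ℝ) hc
  rw [htop, finrank_top] at this
  omega

theorem toSphere_setOf_inner_eq (hE : 2 ≤ Module.finrank ℝ E) (c : E) (τ : ℝ)
    (h : ∃ w : Metric.sphere (0 : E) 1, ⟪c, (w : E)⟫ ≠ τ) :
    μ.toSphere {w : Metric.sphere (0 : E) 1 | ⟪c, (w : E)⟫ = τ} = 0 := by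
  rcases eq_or_ne c 0 with rfl | hc
  · obtain ⟨w, hw⟩ := h
    simp only [inner_zero_left] at hw ⊢
    simp [hw]
  have hmeas : MeasurableSet {w : Metric.sphere (0 : E) 1 | ⟪c, (w : E)⟫ = τ} :=
    measurableSet_eq_fun (by fun_prop) measurable_const
  rw [μ.toSphere_apply' hmeas]
  refine mul_eq_zero_of_right _ (measure_mono_null ?_ (addHaar_setOf_inner_eq_mul_norm μ hE hc τ))
  rintro _ ⟨t, ht, _, ⟨w, hw, rfl⟩, rfl⟩
  simp only [mem_ofPred_eq] at hw ⊢
  rw [real_inner_smul_right, hw, norm_smul, norm_eq_of_mem_sphere w, Real.norm_eq_abs,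
    abs_of_pos ht.1, mul_one, mul_comm]

theorem ae_norm_add_smul_sub_sq_ne (hE : 2 ≤ Module.finrank ℝ E) (A C : E) (r s : ℝ)
    (h : ∃ w₀ : Metric.sphere (0 : E) 1, ‖A + r • (w₀ : E) - C‖ ^ 2 ≠ s) :
    ∀ᵐ w : Metric.sphere (0 : E) 1 ∂μ.toSphere, ‖A + r • (w : E) - C‖ ^ 2 ≠ s := by
  have hsq (w : Metric.sphere (0 : E) 1) :
      ‖A + r • (w : E) - C‖ ^ 2 = ⟪(2 * r) • (A - C), (w : E)⟫ + (‖A - C‖ ^ 2 + r ^ 2) := by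
    rw [norm_add_smul_sub_sq r (norm_eq_of_mem_sphere w), real_inner_smul_left]
    ring
  obtain ⟨w₀, hw₀⟩ := h
  rw [ae_iff]
  refine measure_mono_null (fun w (hw : ¬_ ≠ s) => ?_) (toSphere_setOf_inner_eq μ hE
    ((2 * r) • (A - C)) (s - (‖A - C‖ ^ 2 + r ^ 2)) ⟨w₀, fun h => hw₀ (by linarith [hsq w₀])⟩)
  show ⟪_, _⟫ = _
  linarith [hsq w, not_not.1 hw]

end Cone

theorem IsSphericalDesign.average_eq_of_ae_eq {D M n : ℕ} {v : Fin n → EuclideanSpace ℝ (Fin D)}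
    (hv : IsSphericalDesign D M n v) {G : MvPolynomial (Fin D) ℝ} (hG : G.totalDegree ≤ M)
    {f : EuclideanSpace ℝ (Fin D) → ℝ} (hfv : ∀ i, f (v i) = eval (v i) G)
    (hf : ∀ᵐ w : Metric.sphere (0 : EuclideanSpace ℝ (Fin D)) 1 ∂volume.toSphere,
      f w = eval w G) :
    (1 / (n : ℝ)) * ∑ i, f (v i) =
      ⨍ w : Metric.sphere (0 : EuclideanSpace ℝ (Fin D)) 1, f w ∂volume.toSphere := by
  simp only [hfv]
  rw [hv.2 G hG]
  exact average_congr (hf.mono fun w hw => hw.symm)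

theorem IsSphericalDesign.average_eval_inversionCurvCenter {d M n : ℕ}
    {v : Fin n → EuclideanSpace ℝ (Fin (d + 1))} (hv : IsSphericalDesign (d + 1) M n v)
    (hn : 0 < n) (A C : EuclideanSpace ℝ (Fin (d + 1))) (r : ℝ) {bb : ℝ} (hbb : bb ≠ 0)
    (hreg : ∀ i, ‖A + r • v i - C‖ ^ 2 ≠ 1 / bb ^ 2) {F : MvPolynomial (Fin (d + 1)) ℝ}
    (hF : F.totalDegree ≤ M) :
    (1 / (n : ℝ)) * ∑ i, eval (inversionCurvCenter C bb (A + r • v i) :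
        EuclideanSpace ℝ (Fin (d + 1))) F =
      ⨍ w : Metric.sphere (0 : EuclideanSpace ℝ (Fin (d + 1))) 1,
        eval (inversionCurvCenter C bb (A + r • (w : EuclideanSpace ℝ (Fin (d + 1)))) :
          EuclideanSpace ℝ (Fin (d + 1))) F ∂volume.toSphere := by
  set f : EuclideanSpace ℝ (Fin (d + 1)) → ℝ := fun y =>
    eval (inversionCurvCenter C bb (A + r • y) : EuclideanSpace ℝ (Fin (d + 1))) F
  rcases Nat.eq_zero_or_pos F.totalDegree with hF0 | hF0
  · exact hv.average_eq_of_ae_eq (f := f) hF (fun i => eval_eq_of_totalDegree_eq_zero hF0 _ _)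
      (ae_of_all _ fun w => eval_eq_of_totalDegree_eq_zero hF0 _ _)
  rcases Nat.eq_zero_or_pos d with rfl | hd
  · obtain ⟨G, hG, hfG⟩ := EuclideanSpace.exists_totalDegree_le_one_eval_eq_of_norm_eq_one f
    exact hv.average_eq_of_ae_eq (f := f) (hG.trans (hF0.trans_le hF))
      (fun i => hfG _ (hv.1 i)) (ae_of_all _ fun w => hfG _ (norm_eq_of_mem_sphere w))
  · obtain ⟨G, hG, hfG⟩ := exists_totalDegree_le_eval_inversionCurvCenter F A C r hbb
    have hae := ae_norm_add_smul_sub_sq_ne volume (by simp; omega) A C r (1 / bb ^ 2)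
      ⟨⟨v ⟨0, hn⟩, by simpa using hv.1 _⟩, hreg _⟩
    exact hv.average_eq_of_ae_eq (f := f) (hG.trans hF) (fun i => hfG _ (hv.1 i) (hreg i))
      (hae.mono fun w hw => hfG _ (norm_eq_of_mem_sphere w) hw)

theorem design_average_inverted_spheres_general {d M n : ℕ}
    (v : Fin n → EuclideanSpace ℝ (Fin (d + 1)))
    (hdesign : IsSphericalDesign (d + 1) M n v) (hn : 0 < n)
    (A C : EuclideanSpace ℝ (Fin (d + 1))) (r bb : ℝ) (hbb : 0 < bb)
    (hreg : ∀ i, ‖(A + r • v i) - C‖ ≠ 1 / bb)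
    (b : Fin n → ℝ) (hb : ∀ i, b i = bb * ‖(A + r • v i) - C‖ ^ 2 - 1 / bb)
    (x : Fin n → EuclideanSpace ℝ (Fin (d + 1)))
    (hx : ∀ i, x i = C + (‖(A + r • v i) - C‖ ^ 2 - 1 / bb ^ 2)⁻¹ • ((A + r • v i) - C))
    (F : MvPolynomial (Fin (d + 1)) ℝ) (hF : F.totalDegree ≤ M) :
    (1 / (n : ℝ)) * ∑ i, MvPolynomial.eval (b i • x i) F
      = ⨍ w : Metric.sphere (0 : EuclideanSpace ℝ (Fin (d + 1))) 1,
          MvPolynomial.eval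
            (((bb * ‖(A + r • (w : EuclideanSpace ℝ (Fin (d + 1)))) - C‖ ^ 2 - 1 / bb) •
              (C + (‖(A + r • (w : EuclideanSpace ℝ (Fin (d + 1)))) - C‖ ^ 2 - 1 / bb ^ 2)⁻¹ •
                ((A + r • (w : EuclideanSpace ℝ (Fin (d + 1)))) - C))) : EuclideanSpace ℝ (Fin (d + 1))) F
          ∂(volume.toSphere) := by
  have hbx : ∀ i, b i • x i = inversionCurvCenter C bb (A + r • v i) := fun i => by
    rw [hb, hx]; rfl
  have hreg_sq : ∀ i, ‖A + r • v i - C‖ ^ 2 ≠ 1 / bb ^ 2 := fun i h =>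
    hreg i ((sq_eq_sq₀ (norm_nonneg _) (by positivity)).1 (by rwa [div_pow, one_pow]))
  simp only [hbx]
  exact hdesign.average_eval_inversionCurvCenter hn A C r hbb.ne' hreg_sq hF

/-- **Theorem 2.1.** Take congruent spheres of curvature `bb` centered at the points
`A + r • v_i` of a scaled spherical `M`-design, and invert them in the unit sphere
centered at `C`; let `(x_i, b_i)` be the centers and curvatures of the images. Then the
average of `F(b_i • x_i)` over the design equals the corresponding average over the whole
sphere, for every polynomial `F` of degree at most `M`; in particular it does not depend
on the choice of design. -/
theorem design_average_inverted_spheres {d M n : ℕ}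
    (v : Fin n → EuclideanSpace ℝ (Fin (d + 1)))
    (hdesign : IsSphericalDesign (d + 1) M n v) (hn : 0 < n)
    (A C : EuclideanSpace ℝ (Fin (d + 1))) (r bb : ℝ) (hr : 0 < r) (hbb : 0 < bb)
    (hreg : ∀ i, ‖(A + r • v i) - C‖ ≠ 1 / bb)
    (b : Fin n → ℝ) (hb : ∀ i, b i = bb * ‖(A + r • v i) - C‖ ^ 2 - 1 / bb)
    (x : Fin n → EuclideanSpace ℝ (Fin (d + 1)))
    (hx : ∀ i, x i = C + (‖(A + r • v i) - C‖ ^ 2 - 1 / bb ^ 2)⁻¹ • ((A + r • v i) - C))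
    (F : MvPolynomial (Fin (d + 1)) ℝ) (hF : F.totalDegree ≤ M) :
    (1 / (n : ℝ)) * ∑ i, MvPolynomial.eval (b i • x i) F
      = ⨍ w : Metric.sphere (0 : EuclideanSpace ℝ (Fin (d + 1))) 1,
          MvPolynomial.eval
            (((bb * ‖(A + r • (w : EuclideanSpace ℝ (Fin (d + 1)))) - C‖ ^ 2 - 1 / bb) •
              (C + (‖(A + r • (w : EuclideanSpace ℝ (Fin (d + 1)))) - C‖ ^ 2 - 1 / bb ^ 2)⁻¹ •
                ((A + r • (w : EuclideanSpace ℝ (Fin (d + 1)))) - C))) : EuclideanSpace ℝ (Fin (d + 1))) F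
          ∂(volume.toSphere) :=
  design_average_inverted_spheres_general v hdesign hn A C r bb hbb hreg b hb x hx F hF
end

section
/- With the setup of the previous theorem (congruent spheres of curvature b̄ centered at the points A + r v_i of a scaled spherical M-design, inverted in the unit sphere centered at C, yielding curvatures b_i), for every m ≤ M the average (1/n) ∑_i b_i^m depends only on A, r, b̄, C, m and not on the particular M-design: it equals the integral over v ∈ S^d of (b̄ |A + r v - C|^2 - 1/b̄)^m. -/
/-!
On the unit sphere, `bb * ‖A + r • v - C‖ ^ 2 - 1 / bb` is an affine function `c + ⟪a, v⟫` of `v`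
(expand the square and use `‖v‖ = 1`). Its `m`-th power is therefore a polynomial of degree at
most `m ≤ M`, which an `M`-design averages exactly.
-/

open MeasureTheory

open MvPolynomial

noncomputable def affinePoly {D : ℕ} (c : ℝ) (a : EuclideanSpace ℝ (Fin D)) :
    MvPolynomial (Fin D) ℝ :=
  C c + ∑ j, C (a j) * X j

theorem totalDegree_affinePoly_le {D : ℕ} (c : ℝ) (a : EuclideanSpace ℝ (Fin D)) :
    (affinePoly c a).totalDegree ≤ 1 := by
  refine (totalDegree_add _ _).trans (max_le (by simp) ?_)
  refine (totalDegree_finsetSum _ _).trans (Finset.sup_le fun j _ => ?_)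
  exact (totalDegree_mul _ _).trans (by simp)

theorem eval_affinePoly {D : ℕ} (c : ℝ) (a x : EuclideanSpace ℝ (Fin D)) :
    eval x (affinePoly c a) = c + inner ℝ a x := by
  simp [affinePoly, PiLp.inner_apply, mul_comm]

theorem IsSphericalDesign.average_pow_eval {D M n m : ℕ} {x : Fin n → EuclideanSpace ℝ (Fin D)}
    (h : IsSphericalDesign D M n x) (F : MvPolynomial (Fin D) ℝ) (hF : m * F.totalDegree ≤ M) :
    (1 / (n : ℝ)) * ∑ i, eval (x i) F ^ m
      = ⨍ v : Metric.sphere (0 : EuclideanSpace ℝ (Fin D)) 1,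
          eval (v : EuclideanSpace ℝ (Fin D)) F ^ m ∂(volume.toSphere) := by
  simpa only [map_pow] using h.2 (F ^ m) ((totalDegree_pow F m).trans hF)

theorem IsSphericalDesign.average_pow_affine {D M n m : ℕ}
    {x : Fin n → EuclideanSpace ℝ (Fin D)} (h : IsSphericalDesign D M n x) (hm : m ≤ M)
    (c : ℝ) (a : EuclideanSpace ℝ (Fin D)) :
    (1 / (n : ℝ)) * ∑ i, (c + inner ℝ a (x i)) ^ m
      = ⨍ v : Metric.sphere (0 : EuclideanSpace ℝ (Fin D)) 1,
          (c + inner ℝ a (v : EuclideanSpace ℝ (Fin D))) ^ m ∂(volume.toSphere) := by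
  have hdeg : m * (affinePoly c a).totalDegree ≤ M :=
    (Nat.mul_le_mul_left m (totalDegree_affinePoly_le c a)).trans (by simpa using hm)
  simpa only [eval_affinePoly] using h.average_pow_eval (affinePoly c a) hdeg

theorem inverted_curvature_eq_affine {E : Type*} [NormedAddCommGroup E] [InnerProductSpace ℝ E]
    (A C x : E) (r bb : ℝ) (hx : ‖x‖ = 1) :
    bb * ‖A + r • x - C‖ ^ 2 - 1 / bb
      = bb * (‖A - C‖ ^ 2 + r ^ 2) - 1 / bb + inner ℝ ((2 * r * bb) • (A - C)) x := by
  rw [show A + r • x - C = (A - C) + r • x by abel, norm_add_sq_real, real_inner_smul_right,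
    real_inner_smul_left, norm_smul, hx, Real.norm_eq_abs, mul_one, sq_abs]
  ring

theorem design_average_inverted_curvature_powers_general {d M n : ℕ}
    (v : Fin n → EuclideanSpace ℝ (Fin (d + 1)))
    (hdesign : IsSphericalDesign (d + 1) M n v)
    (A C : EuclideanSpace ℝ (Fin (d + 1))) (r bb : ℝ)
    (b : Fin n → ℝ) (hb : ∀ i, b i = bb * ‖(A + r • v i) - C‖ ^ 2 - 1 / bb)
    (m : ℕ) (hm : m ≤ M) :
    (1 / (n : ℝ)) * ∑ i, (b i) ^ m
      = ⨍ w : Metric.sphere (0 : EuclideanSpace ℝ (Fin (d + 1))) 1,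
          (bb * ‖(A + r • (w : EuclideanSpace ℝ (Fin (d + 1)))) - C‖ ^ 2 - 1 / bb) ^ m
          ∂(volume.toSphere) := by
  simp only [hb, inverted_curvature_eq_affine A C _ r bb (hdesign.1 _)]
  rw [hdesign.average_pow_affine hm]
  congr with w
  rw [inverted_curvature_eq_affine A C _ r bb (norm_eq_of_mem_sphere w)]

/-- **Corollary 2.4.** For congruent spheres of curvature `bb` centered at the points
`A + r • v_i` of a scaled spherical `M`-design, inverted in the unit sphere centered at
`C`, the `m`-th power-sum average of the resulting curvatures `b_i`, for `m ≤ M`,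
equals the corresponding spherical average, hence depends only on `A, r, bb, C, m`
and not on the particular design. -/
theorem design_average_inverted_curvature_powers {d M n : ℕ}
    (v : Fin n → EuclideanSpace ℝ (Fin (d + 1)))
    (hdesign : IsSphericalDesign (d + 1) M n v) (hn : 0 < n)
    (A C : EuclideanSpace ℝ (Fin (d + 1))) (r bb : ℝ) (hr : 0 < r) (hbb : 0 < bb)
    (hreg : ∀ i, ‖(A + r • v i) - C‖ ≠ 1 / bb)
    (b : Fin n → ℝ) (hb : ∀ i, b i = bb * ‖(A + r • v i) - C‖ ^ 2 - 1 / bb)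
    (m : ℕ) (hm : m ≤ M) :
    (1 / (n : ℝ)) * ∑ i, (b i) ^ m
      = ⨍ w : Metric.sphere (0 : EuclideanSpace ℝ (Fin (d + 1))) 1,
          (bb * ‖(A + r • (w : EuclideanSpace ℝ (Fin (d + 1)))) - C‖ ^ 2 - 1 / bb) ^ m
          ∂(volume.toSphere) :=
  design_average_inverted_curvature_powers_general v hdesign A C r bb b hb m hm
end

section
/- Let a sphere in ℝ^d have center x and curvature b̄ ≠ 0. Its preimage under stereographic projection from the South Pole to S^d is a sphere on S^d whose spherical curvature cot α satisfies cot α = (b̄^2 - 1)/(2 b̄) + (b̄/2) |x|^2. -/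
/-!
Stereographic projection `σ(y) = (y₁, …, y_d) / (1 + y₀)` has inverse
`z ↦ (1 - |z|², 2z) / (1 + |z|²)`. For `y ∈ S^d`, multiplying `|σ(y) - x|² = r²` by `1 + y₀`
and using `|y| = 1` gives the linear equation `⟪q, y⟫ = c` with `q = (1 - |x|² + r², 2x)` and
`c = 1 + |x|² - r²`; the South Pole never satisfies it. Since `|q|² = c² + (2r)²`, the section has
`cos α = ±c / |q|` and `sin α = 2r / |q|`, so `cot α = ±c / (2r)`, which for `r = 1 / |b̄|` and the
sign of `b̄` is `(b̄² - 1) / (2b̄) + (b̄/2)|x|²`.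
-/

open Real

/-- Stereographic projection of `S^d ⊂ ℝ^{d+1}` from the South Pole `(-1,0,…,0)` to the
hyperplane `y₀ = 0`. -/
noncomputable def stereoProj {d : ℕ} (y : EuclideanSpace ℝ (Fin (d + 1))) :
    EuclideanSpace ℝ (Fin d) :=
  WithLp.toLp 2 (fun i : Fin d => y i.succ / (1 + y 0))

theorem exists_cos_sin_eq_div_sqrt (c : ℝ) {s : ℝ} (hs : 0 < s) :
    ∃ α, 0 < α ∧ α < π ∧ cos α = c / √(c ^ 2 + s ^ 2) ∧ sin α = s / √(c ^ 2 + s ^ 2) := by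
  have hz : (⟨c, s⟩ : ℂ) ≠ 0 := fun h => hs.ne' (congrArg Complex.im h)
  have hnorm : ‖(⟨c, s⟩ : ℂ)‖ = √(c ^ 2 + s ^ 2) := by
    rw [Complex.norm_def, Complex.normSq_mk]; ring_nf
  have hsin := Complex.sin_arg ⟨c, s⟩
  rw [hnorm] at hsin
  refine ⟨Complex.arg ⟨c, s⟩, ?_, Complex.arg_lt_pi_iff.2 (Or.inr hs.ne'), ?_, hsin⟩
  · refine (Complex.arg_nonneg_iff.2 hs.le).lt_of_ne fun h => ?_
    rw [← h, sin_zero] at hsin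
    exact (div_pos hs (sqrt_pos.2 (by positivity))).ne hsin
  · rw [Complex.cos_arg hz, hnorm]

namespace EuclideanSpace
variable {d : ℕ}

def cons (a : ℝ) (v : EuclideanSpace ℝ (Fin d)) : EuclideanSpace ℝ (Fin (d + 1)) :=
  WithLp.toLp 2 (Fin.cons a v)

def tail (y : EuclideanSpace ℝ (Fin (d + 1))) : EuclideanSpace ℝ (Fin d) :=
  WithLp.toLp 2 (Fin.tail y)

@[simp] theorem cons_zero (a : ℝ) (v : EuclideanSpace ℝ (Fin d)) : cons a v 0 = a := rfl
@[simp] theorem cons_succ (a : ℝ) (v : EuclideanSpace ℝ (Fin d)) (i : Fin d) :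
    cons a v i.succ = v i := rfl

theorem cons_zero_tail (y : EuclideanSpace ℝ (Fin (d + 1))) : cons (y 0) (tail y) = y := by
  ext i; exact Fin.cases rfl (fun _ => rfl) i

theorem norm_cons_sq (a : ℝ) (v : EuclideanSpace ℝ (Fin d)) :
    ‖cons a v‖ ^ 2 = a ^ 2 + ‖v‖ ^ 2 := by
  simp [EuclideanSpace.real_norm_sq_eq, Fin.sum_univ_succ]

theorem inner_cons_cons (a b : ℝ) (v w : EuclideanSpace ℝ (Fin d)) :
    inner ℝ (cons a v) (cons b w) = a * b + inner ℝ v w := by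
  simp [PiLp.inner_apply, Fin.sum_univ_succ, mul_comm]

end EuclideanSpace

open EuclideanSpace

section StereoProj

variable {d : ℕ}

theorem stereoProj_cons (t : ℝ) (w : EuclideanSpace ℝ (Fin d)) :
    stereoProj (cons t w) = (1 + t)⁻¹ • w := by
  ext i; simp [stereoProj, div_eq_inv_mul]

noncomputable def stereoProjInv (z : EuclideanSpace ℝ (Fin d)) : EuclideanSpace ℝ (Fin (d + 1)) :=
  cons ((1 - ‖z‖ ^ 2) / (1 + ‖z‖ ^ 2)) ((2 / (1 + ‖z‖ ^ 2)) • z)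

theorem norm_stereoProjInv (z : EuclideanSpace ℝ (Fin d)) : ‖stereoProjInv z‖ = 1 := by
  have h : 0 < 1 + ‖z‖ ^ 2 := by positivity
  rw [← pow_eq_one_iff_of_nonneg (norm_nonneg _) two_ne_zero, stereoProjInv, norm_cons_sq,
    norm_smul, mul_pow, Real.norm_eq_abs, sq_abs]
  field_simp
  ring

theorem stereoProj_stereoProjInv (z : EuclideanSpace ℝ (Fin d)) :
    stereoProj (stereoProjInv z) = z := by
  have h : 0 < 1 + ‖z‖ ^ 2 := by positivity
  rw [stereoProjInv, stereoProj_cons, smul_smul]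
  convert one_smul ℝ z
  field_simp
  ring

theorem eq_cons_neg_one_zero {y : EuclideanSpace ℝ (Fin (d + 1))} (hy : ‖y‖ = 1)
    (h0 : y 0 = -1) : y = cons (-1) 0 := by
  have h := norm_cons_sq (y 0) (tail y)
  rw [cons_zero_tail, hy, h0] at h
  have htail : tail y = 0 := norm_eq_zero.1 (pow_eq_zero_iff two_ne_zero |>.1 (by linarith))
  rw [← cons_zero_tail y, h0, htail]

theorem one_add_mul_norm_stereoProj_sub_sq {y : EuclideanSpace ℝ (Fin (d + 1))}
    (hy : ‖y‖ = 1) (hy0 : 1 + y 0 ≠ 0) (x : EuclideanSpace ℝ (Fin d)) (R : ℝ) :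
    (1 + y 0) * (‖stereoProj y - x‖ ^ 2 - R) =
      1 + ‖x‖ ^ 2 - R - inner ℝ (cons (1 - ‖x‖ ^ 2 + R) ((2 : ℝ) • x)) y := by
  obtain ⟨t, w, rfl⟩ : ∃ t w, y = cons t w := ⟨y 0, tail y, (cons_zero_tail y).symm⟩
  have h : t ^ 2 + ‖w‖ ^ 2 = 1 := by rw [← norm_cons_sq, hy, one_pow]
  rw [cons_zero] at hy0 ⊢
  rw [stereoProj_cons, norm_sub_sq_real, norm_smul, real_inner_smul_left, inner_cons_cons,
    real_inner_smul_left, real_inner_comm, mul_pow, Real.norm_eq_abs, sq_abs]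
  field_simp
  linear_combination h

theorem stereoProj_image_sphere_inter_hyperplane (x : EuclideanSpace ℝ (Fin d)) {r : ℝ}
    (hr : 0 ≤ r) :
    stereoProj '' {y | ‖y‖ = 1 ∧
        inner ℝ (cons (1 - ‖x‖ ^ 2 + r ^ 2) ((2 : ℝ) • x)) y = 1 + ‖x‖ ^ 2 - r ^ 2} =
      Metric.sphere x r := by
  ext z
  simp only [Set.mem_image, Set.mem_ofPred_eq, mem_sphere_iff_norm]
  constructor
  · rintro ⟨y, ⟨hy, hplane⟩, rfl⟩
    have hy0 : 1 + y 0 ≠ 0 := by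
      intro h
      rw [eq_cons_neg_one_zero hy (by linarith), inner_cons_cons, inner_zero_right] at hplane
      linarith
    have key := one_add_mul_norm_stereoProj_sub_sq hy hy0 x (r ^ 2)
    rw [hplane, sub_self, mul_eq_zero, or_iff_right hy0, sub_eq_zero] at key
    exact (sq_eq_sq₀ (norm_nonneg _) hr).1 key
  · intro hz
    refine ⟨stereoProjInv z, ⟨norm_stereoProjInv z, ?_⟩, stereoProj_stereoProjInv z⟩
    have hy0 : 1 + stereoProjInv z 0 ≠ 0 := by
      have : 0 < 1 + ‖z‖ ^ 2 := by positivity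
      rw [stereoProjInv, cons_zero]
      field_simp
      ring_nf
      positivity
    have key := one_add_mul_norm_stereoProj_sub_sq (norm_stereoProjInv z) hy0 x (r ^ 2)
    rw [stereoProj_stereoProjInv, hz, sub_self, mul_zero] at key
    linarith

end StereoProj

/-- **Equation (7).** The preimage under stereographic projection of the sphere in `ℝ^d`
with center `x` and curvature `bb ≠ 0` (radius `1/|bb|`) is a sphere on `S^d`
(an intersection `{y ∈ S^d : p ⬝ y = cos α}`) whose spherical curvature satisfies
`cot α = (bb² - 1)/(2 bb) + (bb/2) |x|²`. -/
theorem stereoProj_preimage_curvature {d : ℕ} (x : EuclideanSpace ℝ (Fin d))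
    (bb : ℝ) (hbb : bb ≠ 0) :
    ∃ (p : EuclideanSpace ℝ (Fin (d + 1))) (α : ℝ), ‖p‖ = 1 ∧ 0 < α ∧ α < Real.pi ∧
      stereoProj ''
          {y : EuclideanSpace ℝ (Fin (d + 1)) |
            ‖y‖ = 1 ∧ inner ℝ p y = (Real.cos α : ℝ)}
        = Metric.sphere x (1 / |bb|) ∧
      Real.cos α / Real.sin α = (bb ^ 2 - 1) / (2 * bb) + (bb / 2) * ‖x‖ ^ 2 := by
  obtain ⟨r, hr⟩ : ∃ r, r = 1 / |bb| := ⟨_, rfl⟩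
  rw [← hr]
  have hbr : bb ^ 2 * r ^ 2 = 1 := by rw [hr, div_pow, sq_abs]; field_simp
  set c := 1 + ‖x‖ ^ 2 - r ^ 2 with hc
  set q := cons (1 - ‖x‖ ^ 2 + r ^ 2) ((2 : ℝ) • x)
  obtain ⟨α, hα0, hαπ, hcos, hsin⟩ := exists_cos_sin_eq_div_sqrt (bb * c) two_pos
  set M := √((bb * c) ^ 2 + 2 ^ 2)
  have hM : 0 < M := sqrt_pos.2 (by positivity)
  -- `‖q‖² = c² + (2r)²`, so normalising `q` with the sign of `bb` gives
  -- `cos α = bb c / M` and `sin α = 2 / M`, where `M = |bb| ‖q‖`.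
  have hq : ‖bb • q‖ = M := by
    rw [← sq_eq_sq₀ (norm_nonneg _) hM.le, norm_smul, mul_pow, norm_cons_sq, norm_smul,
      Real.norm_eq_abs, Real.norm_eq_abs, sq_abs, mul_pow, sq_abs, sq_sqrt (by positivity)]
    linear_combination 4 * hbr
  refine ⟨M⁻¹ • bb • q, α, ?_, hα0, hαπ, ?_, ?_⟩
  · rw [norm_smul, hq, norm_inv, Real.norm_of_nonneg hM.le, inv_mul_cancel₀ hM.ne']
  · have hplane : ∀ y, inner ℝ (M⁻¹ • bb • q) y = cos α ↔ inner ℝ q y = c := fun y => by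
      rw [real_inner_smul_left, real_inner_smul_left, hcos, ← mul_assoc,
        show bb * c / M = M⁻¹ * bb * c by ring, mul_right_inj' (by positivity)]
    simp only [hplane]
    exact stereoProj_image_sphere_inter_hyperplane x (hr ▸ by positivity)
  · rw [hcos, hsin, div_div_div_cancel_right₀ hM.ne', hc, hr, div_pow, sq_abs]
    field_simp
    ring
end

section
/- Under the hypotheses of the previous statement, let z_j(θ) ∈ ℂ be the centers and b_j(θ) the curvatures of the images under a fixed Möbius transformation Ψ of the k circles of the rotated Steiner chain with concentric parents. Then for all integers 0 ≤ n ≤ m ≤ k-1, the sum ∑_{j=1}^k b_j(θ)^m z_j(θ)^n is independent of θ. -/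
open OnePoint Real

/-- A similarity of the plane `ℂ`: `z ↦ a z + v` or `z ↦ a z̄ + v` with `a ≠ 0`. -/
def IsSimilarityC (f : ℂ → ℂ) : Prop :=
  ∃ a v : ℂ, a ≠ 0 ∧
    ((∀ z, f z = a * z + v) ∨ (∀ z, f z = a * (starRingEnd ℂ) z + v))

/-- Inversion in the unit circle centered at `c`. -/
noncomputable def cInversion (c z : ℂ) : ℂ := c + (z - c) / ((Complex.normSq (z - c) : ℂ))

/-- Extension of a planar map to `ℂ ∪ {∞}`, fixing `∞`. -/
def extendC (f : ℂ → ℂ) : OnePoint ℂ → OnePoint ℂ := Option.map f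

/-- Inversion in the unit circle centered at `c`, extended to `ℂ ∪ {∞}`. -/
noncomputable def extInversionC (c : ℂ) : OnePoint ℂ → OnePoint ℂ :=
  fun p => Option.elim p (OnePoint.some c)
    (fun z => if z = c then (∞ : OnePoint ℂ) else OnePoint.some (cInversion c z))

/-- A Möbius (conformal) transformation of `ℂ ∪ {∞}`: an element of the group of
transformations generated by extended similarities and unit-circle inversions. -/
def IsMobiusC (g : OnePoint ℂ → OnePoint ℂ) : Prop :=
  g ∈ Submonoid.closure
    {f : Function.End (OnePoint ℂ) |
      (∃ s, IsSimilarityC s ∧ f = extendC s) ∨ ∃ c, f = extInversionC c}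

/-!
A cooriented circle `β |z|² - 2 Re (w̄ z) + δ = 0`, whose interior is where the left side is
negative, is recorded by its coordinates `(β, w, δ)`; the circle of signed curvature `b` and
center `z₀`, normalised by `|w|² - βδ = 1`, has `β = b` and `w = b z₀`. Similarities and
inversions act on these coordinates linearly, multiplying `|w|² - βδ` by a positive factor, so a
Möbius map `Ψ` does so with some factor `μ`. Hence the `j`-th image circle has `√μ b_j = ℓ₁(c_j)`
and `√μ b_j z_j = ℓ₂(c_j)` for two fixed linear functionals `ℓ₁, ℓ₂` of the coordinates `c_j` of
the `j`-th rotated circle. These coordinates are affine in `cos φ_j, sin φ_j`, `φ_j = θ + 2πj/k`,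
so with `u_j = e^{iφ_j}` we get `μ^{m/2} u_j^m b_j^m z_j^n = P(u_j)` for a polynomial `P` of
degree at most `2m` that does not depend on `θ`. Summing over `j`, the `k`-th roots of unity kill
every `u^(t - m)` with `0 < |t - m| < k`, leaving `k μ^{-m/2}` times the `m`-th coefficient of `P`.
-/

section RootsOfUnity

open Finset Polynomial

variable {K : Type*} [Field K] {ζ : K} {k : ℕ}

theorem IsPrimitiveRoot.sum_pow_zpow_eq_ite (hζ : IsPrimitiveRoot ζ k) {s : ℤ}
    (hs : s.natAbs < k) :
    ∑ j ∈ range k, (ζ ^ s) ^ j = if s = 0 then (k : K) else 0 := by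
  split_ifs with h0
  · simp [h0]
  have hne : ζ ^ s ≠ 1 := fun h ↦ by
    obtain ⟨c, hc⟩ := (hζ.zpow_eq_one_iff_dvd s).1 h
    have : s.natAbs = k * c.natAbs := by rw [hc, Int.natAbs_mul, Int.natAbs_natCast]
    rcases c.natAbs.eq_zero_or_pos with hc0 | hc0
    · exact h0 (Int.natAbs_eq_zero.1 (by simpa [hc0] using this))
    · nlinarith
  have hk : (ζ ^ s) ^ k = 1 := by
    rw [← zpow_natCast, ← zpow_mul, mul_comm, zpow_mul, zpow_natCast, hζ.pow_eq_one, one_zpow]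
  rw [geom_sum_eq hne, hk, sub_self, zero_div]

theorem IsPrimitiveRoot.sum_eval_mul_inv_pow (hζ : IsPrimitiveRoot ζ k) {m : ℕ} (hm : m < k)
    {P : K[X]} (hP : P.natDegree ≤ 2 * m) {c : K} (hc : c ≠ 0) :
    ∑ j ∈ range k, P.eval (c * ζ ^ j) * (c * ζ ^ j)⁻¹ ^ m = k * P.coeff m := by
  have hζ0 : ζ ≠ 0 := hζ.ne_zero (by omega)
  have hterm : ∀ j, P.eval (c * ζ ^ j) * (c * ζ ^ j)⁻¹ ^ m
      = ∑ t ∈ range (2 * m + 1), P.coeff t * c ^ ((t : ℤ) - m) * (ζ ^ ((t : ℤ) - m)) ^ j := by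
    intro j
    rw [eval_eq_sum_range' (n := 2 * m + 1) (by omega), sum_mul]
    refine sum_congr rfl fun t _ ↦ ?_
    rw [← zpow_natCast (ζ ^ _), ← zpow_mul, mul_comm _ (j : ℤ), zpow_mul, zpow_natCast,
      mul_assoc, mul_assoc, ← mul_zpow, zpow_sub₀ (mul_ne_zero hc (pow_ne_zero j hζ0)),
      zpow_natCast, zpow_natCast, div_eq_mul_inv, inv_pow]
  have hinner : ∀ t ∈ range (2 * m + 1),
      ∑ j ∈ range k, P.coeff t * c ^ ((t : ℤ) - m) * (ζ ^ ((t : ℤ) - m)) ^ j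
        = if t = m then (k : K) * P.coeff m else 0 := by
    intro t ht
    rw [← mul_sum, hζ.sum_pow_zpow_eq_ite (by rw [mem_range] at ht; omega)]
    by_cases htm : t = m
    · simp [htm, mul_comm]
    · simp [htm, sub_eq_zero]
  rw [sum_congr rfl fun j _ ↦ hterm j, sum_comm, sum_congr rfl hinner, sum_ite_eq',
    if_pos (mem_range.2 (by omega))]

end RootsOfUnity

namespace SteinerChain

open Complex ComplexConjugate Polynomial

noncomputable section

abbrev CircleCoord := ℝ × ℂ × ℝ

def circleEqn (v : CircleCoord) (z : ℂ) : ℝ :=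
  v.1 * normSq z - 2 * (conj v.2.1 * z).re + v.2.2

-- `∞` is given the value `v.1`, the limit of `circleEqn v z / |z|²` as `z → ∞`.
def locus (v : CircleCoord) (p : ℝ → Prop) : Set (OnePoint ℂ) :=
  {x | x.elim (p v.1) fun z ↦ p (circleEqn v z)}

def inversiveForm (v : CircleCoord) : ℝ := normSq v.2.1 - v.1 * v.2.2

def ScaleInvariant (p : ℝ → Prop) : Prop := ∀ c t : ℝ, 0 < c → (p (c * t) ↔ p t)

lemma scaleInvariant_eq_zero : ScaleInvariant (· = 0) := fun _ _ hc ↦ by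
  simp [hc.ne']

lemma scaleInvariant_neg : ScaleInvariant (· < 0) := fun _ _ hc ↦
  ⟨fun h ↦ by nlinarith, mul_neg_of_pos_of_neg hc⟩

-- With `p = (· = 0)` and `p = (· < 0)`, `image_locus` says that `g` maps the circle with
-- coordinates `v`, and its interior, to those with coordinates `toLinearMap v`.
structure CircleAction (g : OnePoint ℂ → OnePoint ℂ) where
  toLinearMap : CircleCoord →ₗ[ℝ] CircleCoord
  scale : ℝ
  scale_pos : 0 < scale
  inversiveForm_map : ∀ v, inversiveForm (toLinearMap v) = scale * inversiveForm v
  image_locus : ∀ v p, ScaleInvariant p → g '' locus v p = locus (toLinearMap v) p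

def affineCoordMap (a v₀ : ℂ) : CircleCoord →ₗ[ℝ] CircleCoord where
  toFun v := (v.1, a * v.2.1 + v.1 • v₀,
    normSq a * v.2.2 + normSq v₀ * v.1 + 2 * (a * conj v₀ * v.2.1).re)
  map_add' x y := by ext <;> simp [mul_add, add_smul] <;> ring
  map_smul' c x := by
    ext <;> simp [Complex.real_smul, mul_add, Complex.mul_re] <;> ring

lemma inversiveForm_affineCoordMap (a v₀ : ℂ) (v : CircleCoord) :
    inversiveForm (affineCoordMap a v₀ v) = normSq a * inversiveForm v := by
  simp only [inversiveForm, affineCoordMap, LinearMap.coe_mk, AddHom.coe_mk, Complex.real_smul,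
    normSq_apply, add_re, add_im, mul_re, mul_im, conj_re, conj_im, ofReal_re, ofReal_im]
  ring

lemma circleEqn_affineCoordMap (a v₀ : ℂ) (v : CircleCoord) (z : ℂ) :
    circleEqn (affineCoordMap a v₀ v) (a * z + v₀) = normSq a * circleEqn v z := by
  simp only [circleEqn, affineCoordMap, LinearMap.coe_mk, AddHom.coe_mk, Complex.real_smul,
    normSq_apply, add_re, add_im, mul_re, mul_im, map_add, map_mul, conj_re, conj_im,
    ofReal_re, ofReal_im]
  ring

def conjCoordMap : CircleCoord →ₗ[ℝ] CircleCoord where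
  toFun v := (v.1, conj v.2.1, v.2.2)
  map_add' x y := by ext <;> simp
  map_smul' c x := by ext <;> simp [Complex.real_smul]

lemma circleEqn_conjCoordMap (v : CircleCoord) (z : ℂ) :
    circleEqn (conjCoordMap v) (conj z) = circleEqn v z := by
  simp only [circleEqn, conjCoordMap, LinearMap.coe_mk, AddHom.coe_mk, normSq_conj, ← map_mul,
    conj_re]

def swapCoordMap : CircleCoord →ₗ[ℝ] CircleCoord where
  toFun v := (v.2.2, v.2.1, v.1)
  map_add' _ _ := rfl
  map_smul' _ _ := rfl

lemma circleEqn_div_normSq (v : CircleCoord) {z : ℂ} (hz : z ≠ 0) :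
    circleEqn v (z / normSq z) = (normSq z)⁻¹ * circleEqn (swapCoordMap v) z := by
  have hn : normSq z ≠ 0 := normSq_eq_zero.not.2 hz
  simp only [circleEqn, swapCoordMap, LinearMap.coe_mk, AddHom.coe_mk, normSq_div,
    normSq_ofReal, mul_div_assoc', div_ofReal_re]
  field_simp
  ring

lemma circleEqn_zero (v : CircleCoord) : circleEqn v 0 = v.2.2 := by simp [circleEqn]

@[simp] lemma extendC_infty (f : ℂ → ℂ) : extendC f ∞ = ∞ := rfl

@[simp] lemma extendC_coe (f : ℂ → ℂ) (z : ℂ) : extendC f z = f z := rfl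

@[simp] lemma extInversionC_infty (c : ℂ) : extInversionC c ∞ = c := rfl

@[simp] lemma extInversionC_coe_self (c : ℂ) : extInversionC c c = ∞ := if_pos rfl

lemma extInversionC_coe_of_ne {c z : ℂ} (hz : z ≠ c) :
    extInversionC c z = ((c + (z - c) / normSq (z - c) : ℂ) : OnePoint ℂ) := if_neg hz

lemma extInversionC_zero_coe {z : ℂ} (hz : z ≠ 0) :
    extInversionC 0 z = ((z / normSq z : ℂ) : OnePoint ℂ) := by
  rw [extInversionC_coe_of_ne hz, zero_add, sub_zero]

lemma extInversionC_zero_involutive : Function.Involutive (extInversionC 0) := by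
  intro x
  cases x using OnePoint.rec with
  | infty => simp
  | coe z =>
    by_cases hz : z = 0
    · subst hz
      simp
    · have hn : (normSq z : ℂ) ≠ 0 := ofReal_ne_zero.2 (normSq_eq_zero.not.2 hz)
      rw [extInversionC_zero_coe hz, extInversionC_zero_coe (div_ne_zero hz hn), normSq_div,
        normSq_ofReal]
      congr 1
      push_cast
      field_simp

lemma extInversionC_eq_comp (c : ℂ) :
    extInversionC c = extendC (· + c) ∘ extInversionC 0 ∘ extendC (· - c) := by
  funext x
  cases x using OnePoint.rec with
  | infty => simp
  | coe z =>
    by_cases hz : z = c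
    · subst hz
      simp
    · rw [Function.comp_apply, Function.comp_apply, extendC_coe,
        extInversionC_zero_coe (sub_ne_zero.2 hz), extendC_coe, extInversionC_coe_of_ne hz,
        add_comm]

lemma extendC_comp (f g : ℂ → ℂ) : extendC (f ∘ g) = extendC f ∘ extendC g :=
  (Option.map_comp_map g f).symm

namespace CircleAction

def id : CircleAction id where
  toLinearMap := LinearMap.id
  scale := 1
  scale_pos := one_pos
  inversiveForm_map _ := (one_mul _).symm
  image_locus _ _ _ := Set.image_id _

def comp {g₁ g₂ : OnePoint ℂ → OnePoint ℂ} (T₁ : CircleAction g₁) (T₂ : CircleAction g₂) :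
    CircleAction (g₁ ∘ g₂) where
  toLinearMap := T₁.toLinearMap ∘ₗ T₂.toLinearMap
  scale := T₁.scale * T₂.scale
  scale_pos := mul_pos T₁.scale_pos T₂.scale_pos
  inversiveForm_map v := by
    simp only [LinearMap.comp_apply, T₁.inversiveForm_map, T₂.inversiveForm_map, mul_assoc]
  image_locus v p hp := by
    rw [Set.image_comp, T₂.image_locus v p hp, T₁.image_locus _ p hp, LinearMap.comp_apply]

def ofRightInverse {f f' : ℂ → ℂ} (hf : Function.RightInverse f' f)
    (L : CircleCoord →ₗ[ℝ] CircleCoord) {μ : ℝ} (hμ : 0 < μ)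
    (hL : ∀ v, inversiveForm (L v) = μ * inversiveForm v) (hfst : ∀ v, (L v).1 = v.1)
    (heqn : ∀ v z, circleEqn (L v) (f z) = μ * circleEqn v z) : CircleAction (extendC f) where
  toLinearMap := L
  scale := μ
  scale_pos := hμ
  inversiveForm_map := hL
  image_locus v p hp := by
    ext x
    refine ⟨?_, fun hx ↦ ?_⟩
    · rintro ⟨y, hy, rfl⟩
      cases y using OnePoint.rec with
      | infty =>
        change p (L v).1
        rwa [hfst]
      | coe z =>
        change p (circleEqn (L v) (f z))
        rwa [heqn, hp _ _ hμ]
    · cases x using OnePoint.rec with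
      | infty =>
        change p (L v).1 at hx
        exact ⟨∞, by rwa [hfst] at hx, rfl⟩
      | coe z =>
        refine ⟨(f' z : OnePoint ℂ), ?_, congrArg _ (hf z)⟩
        change p (circleEqn (L v) z) at hx
        change p (circleEqn v (f' z))
        rwa [← hf z, heqn, hp _ _ hμ] at hx

def affine {f : ℂ → ℂ} (a v₀ : ℂ) (ha : a ≠ 0) (hf : ∀ z, f z = a * z + v₀) :
    CircleAction (extendC f) :=
  ofRightInverse (f' := fun z ↦ (z - v₀) / a) (fun z ↦ by rw [hf]; field_simp; ring)
    (affineCoordMap a v₀) (normSq_pos.2 ha) (inversiveForm_affineCoordMap a v₀)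
    (fun _ ↦ rfl) (fun v z ↦ by rw [hf, circleEqn_affineCoordMap])

def conjugation : CircleAction (extendC (starRingEnd ℂ)) :=
  ofRightInverse (f' := starRingEnd ℂ) Complex.conj_conj conjCoordMap one_pos
    (fun v ↦ by simp [inversiveForm, conjCoordMap]) (fun _ ↦ rfl)
    (fun v z ↦ by rw [circleEqn_conjCoordMap, one_mul])

def inversionZero : CircleAction (extInversionC 0) where
  toLinearMap := swapCoordMap
  scale := 1
  scale_pos := one_pos
  inversiveForm_map v := by simp [inversiveForm, swapCoordMap, mul_comm]
  image_locus v p hp := by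
    rw [Set.image_eq_preimage_of_inverse extInversionC_zero_involutive
      extInversionC_zero_involutive]
    ext x
    cases x using OnePoint.rec with
    | infty =>
      change p (circleEqn v 0) ↔ p v.2.2
      rw [circleEqn_zero]
    | coe z =>
      by_cases hz : z = 0
      · subst hz
        change extInversionC 0 (0 : ℂ) ∈ locus v p ↔ p (circleEqn (swapCoordMap v) 0)
        rw [extInversionC_coe_self, circleEqn_zero]
        rfl
      · change (extInversionC 0 z ∈ locus v p) ↔ p (circleEqn (swapCoordMap v) z)
        rw [extInversionC_zero_coe hz]
        change p (circleEqn v (z / normSq z)) ↔ _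
        rw [circleEqn_div_normSq v hz, hp _ _ (inv_pos.2 (normSq_pos.2 hz))]

def inversion (c : ℂ) : CircleAction (extInversionC c) :=
  extInversionC_eq_comp c ▸ (affine 1 c one_ne_zero fun z ↦ by ring).comp
    (inversionZero.comp (affine 1 (-c) one_ne_zero fun z ↦ by ring))

end CircleAction

theorem _root_.IsMobiusC.nonempty_circleAction {g : OnePoint ℂ → OnePoint ℂ}
    (hg : IsMobiusC g) : Nonempty (CircleAction g) := by
  induction hg using Submonoid.closure_induction with
  | mem f hf =>
    obtain ⟨s, ⟨a, v₀, ha, hs | hs⟩, rfl⟩ | ⟨c, rfl⟩ := hf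
    · exact ⟨.affine a v₀ ha hs⟩
    · rw [show s = (a * · + v₀) ∘ starRingEnd ℂ from funext hs, extendC_comp]
      exact ⟨(CircleAction.affine a v₀ ha fun _ ↦ rfl).comp .conjugation⟩
    · exact ⟨.inversion c⟩
  | one => exact ⟨.id⟩
  | mul f g _ _ hf hg => exact ⟨hf.some.comp hg.some⟩

def circleCoords (β : ℝ) (c : ℂ) : CircleCoord := (β, β * c, β * normSq c - β⁻¹)

lemma circleEqn_circleCoords (β : ℝ) (c z : ℂ) :
    circleEqn (circleCoords β c) z = β * (‖z - c‖ ^ 2 - (1 / β) ^ 2) := by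
  rcases eq_or_ne β 0 with rfl | hβ
  · simp [circleEqn, circleCoords]
  simp only [circleEqn, circleCoords, ← normSq_eq_norm_sq, normSq_apply, mul_re, mul_im,
    sub_re, sub_im, conj_re, conj_im, ofReal_re, ofReal_im]
  field_simp
  ring

lemma inversiveForm_circleCoords {β : ℝ} (hβ : β ≠ 0) (c : ℂ) :
    inversiveForm (circleCoords β c) = 1 := by
  simp only [inversiveForm, circleCoords, normSq_mul, normSq_ofReal]
  field_simp
  ring

lemma locus_circleCoords_eq_zero {β : ℝ} (hβ : 0 < β) (c : ℂ) :
    locus (circleCoords β c) (· = 0) = OnePoint.some '' Metric.sphere c (1 / β) := by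
  ext x
  cases x using OnePoint.rec with
  | infty => simpa [locus, circleCoords] using hβ.ne'
  | coe z =>
    rw [OnePoint.coe_injective.mem_set_image, Metric.mem_sphere, dist_eq_norm]
    change circleEqn (circleCoords β c) z = 0 ↔ _
    rw [circleEqn_circleCoords, mul_eq_zero, or_iff_right hβ.ne', sub_eq_zero,
      sq_eq_sq₀ (norm_nonneg _) (by positivity)]

lemma locus_circleCoords_neg {β : ℝ} (hβ : 0 < β) (c : ℂ) :
    locus (circleCoords β c) (· < 0) = OnePoint.some '' Metric.ball c (1 / β) := by
  ext x
  cases x using OnePoint.rec with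
  | infty => simpa [locus, circleCoords] using hβ.le
  | coe z =>
    rw [OnePoint.coe_injective.mem_set_image, Metric.mem_ball, dist_eq_norm]
    change circleEqn (circleCoords β c) z < 0 ↔ _
    rw [circleEqn_circleCoords]
    refine (scaleInvariant_neg _ _ hβ).trans ?_
    dsimp only
    rw [sub_neg, sq_lt_sq₀ (norm_nonneg _) (by positivity)]

lemma coords_eq_of_sphere_subset {v : CircleCoord} {z₀ : ℂ} {ρ : ℝ} (hρ : 0 < ρ)
    (h : ∀ z ∈ Metric.sphere z₀ ρ, circleEqn v z = 0) :
    v.2.1 = v.1 * z₀ ∧ inversiveForm v = (v.1 * ρ) ^ 2 := by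
  have hmem : ∀ e : ℂ, ‖e‖ = 1 → z₀ + ρ * e ∈ Metric.sphere z₀ ρ := fun e he ↦ by
    simp [he, abs_of_pos hρ]
  have h₁ := h _ (hmem 1 (by simp))
  have h₂ := h _ (hmem (-1) (by simp))
  have h₃ := h _ (hmem I (by simp))
  have h₄ := h _ (hmem (-I) (by simp))
  obtain ⟨β, w, δ⟩ := v
  simp only [circleEqn, normSq_apply, mul_re, mul_im, add_re, add_im, conj_re, conj_im,
    ofReal_re, ofReal_im, one_re, one_im, neg_re, neg_im, I_re, I_im] at h₁ h₂ h₃ h₄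
  have hre : ρ * (w.re - β * z₀.re) = 0 := by linear_combination (h₂ - h₁) / 4
  have him : ρ * (w.im - β * z₀.im) = 0 := by linear_combination (h₄ - h₃) / 4
  rw [mul_eq_zero, or_iff_right hρ.ne', sub_eq_zero] at hre him
  refine ⟨Complex.ext (by simp [hre]) (by simp [him]), ?_⟩
  simp only [inversiveForm, normSq_apply]
  rw [hre, him] at h₁ h₂ ⊢
  linear_combination (-β / 2) * (h₁ + h₂)

lemma eq_sqrt_mul_of_sign {x b s : ℝ} (hb : b ≠ 0) (hsign : x < 0 ↔ b < 0)
    (hs : s = (x * (1 / |b|)) ^ 2) : x = √s * b := by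
  rw [hs, Real.sqrt_sq_eq_abs, abs_mul, abs_one_div, abs_abs]
  rcases hb.lt_or_gt with hb' | hb'
  · rw [abs_of_neg (hsign.2 hb'), abs_of_neg hb']
    field_simp
  · rw [abs_of_nonneg (not_lt.1 (hsign.not.2 hb'.not_gt)), abs_of_pos hb']
    field_simp

theorem CircleAction.circleCoords_image {g : OnePoint ℂ → OnePoint ℂ} (T : CircleAction g)
    {β b : ℝ} {c z₀ : ℂ} (hβ : 0 < β) (hb : b ≠ 0)
    (hsphere : g '' (OnePoint.some '' Metric.sphere c (1 / β))
      = OnePoint.some '' Metric.sphere z₀ (1 / |b|))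
    (hball : g '' (OnePoint.some '' Metric.ball c (1 / β))
      = if 0 < b then OnePoint.some '' Metric.ball z₀ (1 / |b|)
        else OnePoint.some '' (Metric.closedBall z₀ (1 / |b|))ᶜ ∪ {∞}) :
    (T.toLinearMap (circleCoords β c)).1 = √T.scale * b ∧
      (T.toLinearMap (circleCoords β c)).2.1 = (T.toLinearMap (circleCoords β c)).1 * z₀ := by
  set v := T.toLinearMap (circleCoords β c)
  have hzero : locus v (· = 0) = OnePoint.some '' Metric.sphere z₀ (1 / |b|) := by
    rw [← T.image_locus _ _ scaleInvariant_eq_zero, locus_circleCoords_eq_zero hβ, hsphere]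
  have hneg : locus v (· < 0) = g '' (OnePoint.some '' Metric.ball c (1 / β)) := by
    rw [← T.image_locus _ _ scaleInvariant_neg, locus_circleCoords_neg hβ]
  have hsign : v.1 < 0 ↔ b < 0 := by
    change ∞ ∈ locus v (· < 0) ↔ _
    rw [hneg, hball]
    split_ifs with hb'
    · simp [hb'.le]
    · simp [hb.lt_or_gt.resolve_right hb']
  obtain ⟨hw, hform⟩ := coords_eq_of_sphere_subset (ρ := 1 / |b|) (by positivity)
    fun z hz ↦ show (z : OnePoint ℂ) ∈ locus v (· = 0) from hzero ▸ Set.mem_image_of_mem _ hz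
  refine ⟨eq_sqrt_mul_of_sign hb hsign ?_, hw⟩
  rw [← hform, T.inversiveForm_map, inversiveForm_circleCoords hβ.ne', mul_one]

lemma exists_quadratic_eval_eq_mul (a₀ a₁ a₂ : ℂ) :
    ∃ P : ℂ[X], P.natDegree ≤ 2 ∧
      ∀ u : ℂ, ‖u‖ = 1 → P.eval u = u * (a₀ + u.re * a₁ + u.im * a₂) := by
  refine ⟨C ((a₁ + I * a₂) / 2) + C a₀ * X + C ((a₁ - I * a₂) / 2) * X ^ 2,
    by compute_degree, fun u hu ↦ ?_⟩
  have hu' : (u.re : ℂ) ^ 2 + (u.im : ℂ) ^ 2 = 1 := by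
    have : u.re * u.re + u.im * u.im = 1 := by
      rw [← normSq_apply, normSq_eq_norm_sq, hu, one_pow]
    exact_mod_cast (by linear_combination this : u.re ^ 2 + u.im ^ 2 = 1)
  simp only [eval_add, eval_mul, eval_C, eval_X, eval_pow]
  set x : ℂ := (u.re : ℂ)
  set y : ℂ := (u.im : ℂ)
  rw [← show x + y * I = u from re_add_im u]
  linear_combination (-(a₁ + I * a₂) / 2) * hu'
    + ((a₁ - I * a₂) / 2 * y ^ 2 - a₂ * x * y) * I_sq

lemma circleCoords_add_mul {u : ℂ} (hu : ‖u‖ = 1) (β r : ℝ) (A : ℂ) :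
    circleCoords β (A + r * u) = (β, β * A, β * (normSq A + r ^ 2) - β⁻¹)
      + u.re • ((0 : ℝ), (β * r : ℂ), 2 * β * r * A.re)
      + u.im • ((0 : ℝ), (β * r : ℂ) * I, 2 * β * r * A.im) := by
  have hu' : u.re * u.re + u.im * u.im = 1 := by
    rw [← normSq_apply, normSq_eq_norm_sq, hu, one_pow]
  refine Prod.ext (by simp [circleCoords]) (Prod.ext ?_ ?_)
  · simp only [circleCoords, Prod.snd_add, Prod.fst_add, Prod.smul_fst, Prod.smul_snd,
      Complex.real_smul]
    conv_lhs => rw [← re_add_im u]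
    ring
  · simp only [circleCoords, Prod.snd_add, Prod.smul_snd, smul_eq_mul, normSq_apply, add_re,
      add_im, mul_re, mul_im, ofReal_re, ofReal_im]
    linear_combination β * r ^ 2 * hu'

lemma exists_quadratic_eval_eq_mul_circleCoords (f : CircleCoord →ₗ[ℝ] ℂ) (β r : ℝ) (A : ℂ) :
    ∃ P : ℂ[X], P.natDegree ≤ 2 ∧
      ∀ u : ℂ, ‖u‖ = 1 → P.eval u = u * f (circleCoords β (A + r * u)) := by
  obtain ⟨P, hdeg, hP⟩ := exists_quadratic_eval_eq_mul
    (f (β, β * A, β * (normSq A + r ^ 2) - β⁻¹)) (f ((0 : ℝ), (β * r : ℂ), 2 * β * r * A.re))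
    (f ((0 : ℝ), (β * r : ℂ) * I, 2 * β * r * A.im))
  refine ⟨P, hdeg, fun u hu ↦ ?_⟩
  rw [hP u hu, circleCoords_add_mul hu, map_add, map_add, _root_.map_smul, _root_.map_smul,
    real_smul, real_smul]

lemma pow_mul_pow_eq_of_eval {K : Type*} [Field K] {u s b z p q : K} {m n : ℕ} (hnm : n ≤ m)
    (hu : u ≠ 0) (hs : s ≠ 0) (hp : p = u * (s * b)) (hq : q = u * (s * b * z)) :
    b ^ m * z ^ n = (s ^ m)⁻¹ * (p ^ (m - n) * q ^ n * u⁻¹ ^ m) := by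
  obtain ⟨d, rfl⟩ := Nat.exists_eq_add_of_le hnm
  rw [hp, hq, Nat.add_sub_cancel_left, inv_pow]
  field_simp
  ring

theorem CircleAction.exists_moment_polynomial {g : OnePoint ℂ → OnePoint ℂ}
    (T : CircleAction g) {β : ℝ} (hβ : 0 < β) (r : ℝ) (A : ℂ) {m n : ℕ} (hnm : n ≤ m) :
    ∃ P : ℂ[X], P.natDegree ≤ 2 * m ∧ ∀ u : ℂ, ‖u‖ = 1 → ∀ (b : ℝ) (z₀ : ℂ), b ≠ 0 →
      g '' (OnePoint.some '' Metric.sphere (A + r * u) (1 / β))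
        = OnePoint.some '' Metric.sphere z₀ (1 / |b|) →
      g '' (OnePoint.some '' Metric.ball (A + r * u) (1 / β))
        = (if 0 < b then OnePoint.some '' Metric.ball z₀ (1 / |b|)
          else OnePoint.some '' (Metric.closedBall z₀ (1 / |b|))ᶜ ∪ {∞}) →
      (b : ℂ) ^ m * z₀ ^ n = ((√T.scale : ℂ) ^ m)⁻¹ * (P.eval u * u⁻¹ ^ m) := by
  obtain ⟨p, hpdeg, hp⟩ := exists_quadratic_eval_eq_mul_circleCoords
    (ofRealCLM.toLinearMap ∘ₗ LinearMap.fst ℝ ℝ _ ∘ₗ T.toLinearMap) β r A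
  obtain ⟨q, hqdeg, hq⟩ := exists_quadratic_eval_eq_mul_circleCoords
    (LinearMap.fst ℝ ℂ ℝ ∘ₗ LinearMap.snd ℝ ℝ _ ∘ₗ T.toLinearMap) β r A
  refine ⟨p ^ (m - n) * q ^ n, ?_, fun u hu b z₀ hb hsphere hball ↦ ?_⟩
  · refine (natDegree_mul_le_of_le (natDegree_pow_le_of_le _ hpdeg)
      (natDegree_pow_le_of_le _ hqdeg)).trans ?_
    omega
  obtain ⟨hcurv, hcenter⟩ := T.circleCoords_image hβ hb hsphere hball
  rw [eval_mul, eval_pow, eval_pow]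
  refine pow_mul_pow_eq_of_eval hnm (norm_ne_zero_iff.1 (by simp [hu]))
    (ofReal_ne_zero.2 (Real.sqrt_pos.2 T.scale_pos).ne') ?_ ?_
  · rw [hp u hu]
    simp [hcurv]
  · rw [hq u hu]
    simp [hcenter, hcurv]

lemma exp_I_mul_two_pi_mul_div_add (k j : ℕ) (θ : ℝ) :
    exp (I * (2 * π * j / k + θ)) = exp (θ * I) * exp (2 * π * I / k) ^ j := by
  rw [← Complex.exp_nat_mul, ← Complex.exp_add]
  ring_nf

end

end SteinerChain

open SteinerChain Finset

theorem steiner_chain_mixed_moments_const_general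
    (k : ℕ) (hk : 3 ≤ k) (A : ℂ) (r bb : ℝ) (hbb : 0 < bb)
    (ctr : ℝ → ℕ → ℂ)
    (hctr : ∀ θ j, ctr θ j = A + r * Complex.exp (Complex.I * (2 * Real.pi * j / k + θ)))
    (Ψ : OnePoint ℂ → OnePoint ℂ) (hΨ : IsMobiusC Ψ)
    (b : ℝ → ℕ → ℝ) (z : ℝ → ℕ → ℂ) (hbne : ∀ θ j, b θ j ≠ 0)
    (himg : ∀ θ, ∀ j ∈ Finset.range k,
      Ψ '' (OnePoint.some '' Metric.sphere (ctr θ j) (1 / bb))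
          = OnePoint.some '' Metric.sphere (z θ j) (1 / |b θ j|) ∧
        Ψ '' (OnePoint.some '' Metric.ball (ctr θ j) (1 / bb))
          = if 0 < b θ j then OnePoint.some '' Metric.ball (z θ j) (1 / |b θ j|)
            else OnePoint.some '' (Metric.closedBall (z θ j) (1 / |b θ j|))ᶜ ∪ {∞}) :
    ∀ θ₁ θ₂ : ℝ, ∀ m n : ℕ, n ≤ m → m ≤ k - 1 →
      ∑ j ∈ Finset.range k, ((b θ₁ j : ℂ)) ^ m * (z θ₁ j) ^ n
        = ∑ j ∈ Finset.range k, ((b θ₂ j : ℂ)) ^ m * (z θ₂ j) ^ n := by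
  intro θ₁ θ₂ m n hnm hmk
  obtain ⟨T⟩ := hΨ.nonempty_circleAction
  obtain ⟨P, hdeg, hP⟩ := T.exists_moment_polynomial hbb r A hnm
  have hζ := Complex.isPrimitiveRoot_exp k (by omega)
  suffices ∀ θ : ℝ, ∑ j ∈ range k, (b θ j : ℂ) ^ m * z θ j ^ n
      = ((√T.scale : ℂ) ^ m)⁻¹ * (k * P.coeff m) by
    rw [this, this]
  intro θ
  rw [← hζ.sum_eval_mul_inv_pow (by omega) hdeg (Complex.exp_ne_zero (θ * Complex.I)), mul_sum]
  refine sum_congr rfl fun j hj ↦ ?_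
  have hu : ‖Complex.exp (θ * Complex.I) * Complex.exp (2 * π * Complex.I / k) ^ j‖ = 1 := by
    rw [norm_mul, norm_pow, hζ.norm'_eq_one (by omega), Complex.norm_exp_ofReal_mul_I, one_pow,
      one_mul]
  simp only [hctr, exp_I_mul_two_pi_mul_div_add] at himg
  exact hP _ hu _ _ (hbne θ j) (himg θ j hj).1 (himg θ j hj).2

/-- **Theorem 1.2 via the rotating concentric model.** With `k ≥ 3` congruent tangent
circles of curvature `bb` centered at `A + r e^{i(2πj/k + θ)}` (`r sin(π/k) = 1/bb`) and
a Möbius transformation `Ψ` sending the `j`-th circle of the `θ`-configuration to the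
cooriented circle with center `z θ j ∈ ℂ` and signed curvature `b θ j`, all the mixed
moments `J_{m,n} = ∑_j (b θ j)^m (z θ j)^n`, `0 ≤ n ≤ m ≤ k - 1`, are independent
of `θ`. -/
theorem steiner_chain_mixed_moments_const
    (k : ℕ) (hk : 3 ≤ k) (A : ℂ) (r bb : ℝ) (hr : 0 < r) (hbb : 0 < bb)
    (htan : r * Real.sin (Real.pi / k) = 1 / bb)
    (ctr : ℝ → ℕ → ℂ)
    (hctr : ∀ θ j, ctr θ j = A + r * Complex.exp (Complex.I * (2 * Real.pi * j / k + θ)))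
    (Ψ : OnePoint ℂ → OnePoint ℂ) (hΨ : IsMobiusC Ψ)
    (b : ℝ → ℕ → ℝ) (z : ℝ → ℕ → ℂ) (hbne : ∀ θ j, b θ j ≠ 0)
    (himg : ∀ θ, ∀ j ∈ Finset.range k,
      Ψ '' (OnePoint.some '' Metric.sphere (ctr θ j) (1 / bb))
          = OnePoint.some '' Metric.sphere (z θ j) (1 / |b θ j|) ∧
        Ψ '' (OnePoint.some '' Metric.ball (ctr θ j) (1 / bb))
          = if 0 < b θ j then OnePoint.some '' Metric.ball (z θ j) (1 / |b θ j|)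
            else OnePoint.some '' (Metric.closedBall (z θ j) (1 / |b θ j|))ᶜ ∪ {∞}) :
    ∀ θ₁ θ₂ : ℝ, ∀ m n : ℕ, n ≤ m → m ≤ k - 1 →
      ∑ j ∈ Finset.range k, ((b θ₁ j : ℂ)) ^ m * (z θ₁ j) ^ n
        = ∑ j ∈ Finset.range k, ((b θ₂ j : ℂ)) ^ m * (z θ₂ j) ^ n :=
  steiner_chain_mixed_moments_const_general k hk A r bb hbb ctr hctr Ψ hΨ b z hbne himg
end

section
/- Let w, z1, z2, z3 ∈ ℂ be the centers and a, b1, b2, b3 ∈ ℝ the signed curvatures of four mutually tangent cooriented circles in the plane. Then (a w + b1 z1 + b2 z2 + b3 z3)^2 = 2 (a^2 w^2 + b1^2 z1^2 + b2^2 z2^2 + b3^2 z3^2). -/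
/-!
Give the circle of signed curvature `c` and centre `z` the augmented coordinates
`(c‖z‖² - 1/c, c, c z, c z̄)`.  For the matrix `W` whose rows are the augmented coordinates of
the four circles, tangency says `W L Wᵀ = 2 D`, with `L` the Lorentz form
`(u, v) ↦ u₀v₁ + u₁v₀ - u₂v₃ - u₃v₂` and `D` the Descartes form `(∑ xᵢ)² - 2 ∑ xᵢ²`.
Since `L² = 1` and `D² = 4`, this forces `W` to be invertible and dualises to `Wᵀ D W = 8 L`.
The column of `W` indexed by `2` is `(bᵢ zᵢ)ᵢ` and `L₂₂ = 0`, so the `(2, 2)` entry of this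
identity is the theorem.
-/

open Matrix ComplexConjugate

namespace Matrix

variable {n α : Type*} [Fintype n] [DecidableEq n] [CommRing α]

theorem mul_mul_eq_of_mul_mul_eq {A B R S T : Matrix n n α} (hR : R * R = 1) (hST : S * T = 1)
    (h : A * R * B = S) : B * T * A = R := by
  have hA : A * (R * B * T) = 1 := by simp only [← Matrix.mul_assoc, h, hST]
  calc B * T * A = R * ((R * B * T) * A) := by simp only [← Matrix.mul_assoc, hR, Matrix.one_mul]
    _ = R := by rw [mul_eq_one_comm.mp hA, Matrix.mul_one]

end Matrix

section DescartesForm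

variable {n α : Type*} [DecidableEq n] [CommRing α]

variable (n α) in
def descartesForm : Matrix n n α := of fun i j => if i = j then -1 else 1

theorem descartesForm_apply (i j : n) :
    descartesForm n α i j = 1 - 2 * if i = j then 1 else 0 := by
  by_cases h : i = j <;> simp [descartesForm, h]; norm_num

variable [Fintype n]

theorem descartesForm_mulVec (x : n → α) (i : n) :
    (descartesForm n α *ᵥ x) i = ∑ j, x j - 2 * x i := by
  simp only [mulVec, dotProduct, descartesForm_apply, sub_mul, one_mul, mul_assoc, ite_mul,
    zero_mul, Finset.sum_sub_distrib, ← Finset.mul_sum, Finset.sum_ite_eq, Finset.mem_univ,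
    if_true]

theorem dotProduct_descartesForm_mulVec (x : n → α) :
    x ⬝ᵥ descartesForm n α *ᵥ x = (∑ i, x i) ^ 2 - 2 * ∑ i, x i ^ 2 := by
  rw [sq (∑ i, x i), Finset.sum_mul, Finset.mul_sum, ← Finset.sum_sub_distrib]
  exact Finset.sum_congr rfl fun i _ => by rw [descartesForm_mulVec]; ring

theorem descartesForm_mul_self (hn : Fintype.card n = 4) :
    descartesForm n α * descartesForm n α = (4 : α) • 1 := by
  ext i j
  have hcol : ∑ k, descartesForm n α k j = 2 := by
    simp only [descartesForm_apply, Finset.sum_sub_distrib, ← Finset.mul_sum, Finset.sum_ite_eq',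
      Finset.mem_univ, if_true, Finset.sum_const, Finset.card_univ, hn]
    norm_num
  change (descartesForm n α *ᵥ fun k => descartesForm n α k j) i = _
  rw [descartesForm_mulVec, hcol, descartesForm_apply]
  by_cases h : i = j <;> simp [h]; norm_num

end DescartesForm

section LorentzForm

variable (α : Type*) [Ring α]

def lorentzForm : Matrix (Fin 4) (Fin 4) α :=
  !![0, 1, 0, 0; 1, 0, 0, 0; 0, 0, 0, -1; 0, 0, -1, 0]

theorem lorentzForm_mul_self : lorentzForm α * lorentzForm α = 1 := by
  ext i j
  fin_cases i <;> fin_cases j <;> simp [lorentzForm, mul_apply, Fin.sum_univ_four, one_apply]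

end LorentzForm

-- `c‖z‖² - 1/c` is the signed curvature of the image of the circle under inversion in the unit circle.
noncomputable def augmentedCoords (c : ℝ) (z : ℂ) : Fin 4 → ℂ :=
  ![(c * ‖z‖ ^ 2 - c⁻¹ : ℝ), c, c * z, c * conj z]

theorem augmentedCoords_lorentzForm (c c' : ℝ) (z z' : ℂ) :
    augmentedCoords c z ⬝ᵥ lorentzForm ℂ *ᵥ augmentedCoords c' z' =
      (c * c' * ‖z - z'‖ ^ 2 - c / c' - c' / c : ℝ) := by
  simp [augmentedCoords, lorentzForm, dotProduct, mulVec, Fin.sum_univ_four, ← Complex.mul_conj']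
  ring

theorem augmentedCoords_lorentzForm_self {c : ℝ} (hc : c ≠ 0) (z : ℂ) :
    augmentedCoords c z ⬝ᵥ lorentzForm ℂ *ᵥ augmentedCoords c z = -2 := by
  rw [augmentedCoords_lorentzForm, sub_self, norm_zero, div_self hc]
  norm_num

theorem augmentedCoords_lorentzForm_of_tangent {c c' : ℝ} (hc : c ≠ 0) (hc' : c' ≠ 0)
    {z z' : ℂ} (h : ‖z - z'‖ ^ 2 = (1 / c + 1 / c') ^ 2) :
    augmentedCoords c z ⬝ᵥ lorentzForm ℂ *ᵥ augmentedCoords c' z' = 2 := by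
  rw [augmentedCoords_lorentzForm, h]
  norm_cast
  field_simp
  ring

/-- **Complex Descartes Theorem** (Lagarias–Mallows–Wilks). Let `z i ∈ ℂ` be the centers
and `b i ∈ ℝ` the nonzero signed curvatures of four mutually tangent cooriented circles
in the plane (tangency with opposite coorientations of circles of radii `1/|b i|` is
encoded by `|z i - z j|² = (1/b i + 1/b j)²`).  Then
`(∑ b i z i)² = 2 ∑ (b i)² (z i)²`. -/
theorem complex_descartes (z : Fin 4 → ℂ) (b : Fin 4 → ℝ) (hb : ∀ i, b i ≠ 0)
    (htangent : ∀ i j, i ≠ j →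
      (‖z i - z j‖) ^ 2 = (1 / b i + 1 / b j) ^ 2) :
    (∑ i, (b i : ℂ) * z i) ^ 2 = 2 * ∑ i, ((b i : ℂ)) ^ 2 * (z i) ^ 2 := by
  set W : Matrix (Fin 4) (Fin 4) ℂ := of fun i => augmentedCoords (b i) (z i)
  have hGram : W * lorentzForm ℂ * Wᵀ = (2 : ℂ) • descartesForm (Fin 4) ℂ := by
    ext i j
    rw [mul_mul_apply, transpose_transpose]
    change augmentedCoords (b i) (z i) ⬝ᵥ _ *ᵥ augmentedCoords (b j) (z j) = _
    by_cases hij : i = j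
    · subst hij
      simpa [descartesForm] using augmentedCoords_lorentzForm_self (hb i) (z i)
    · simpa [descartesForm, hij] using
        augmentedCoords_lorentzForm_of_tangent (hb i) (hb j) (htangent i j hij)
  have hinv : ((2 : ℂ) • descartesForm (Fin 4) ℂ) * ((8⁻¹ : ℂ) • descartesForm (Fin 4) ℂ) = 1 := by
    rw [smul_mul_smul, descartesForm_mul_self (Fintype.card_fin 4), smul_smul]
    norm_num
  have hdual := mul_mul_eq_of_mul_mul_eq (lorentzForm_mul_self ℂ) hinv hGram
  have hcol : Wᵀ 2 = fun i => (b i : ℂ) * z i := rfl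
  have h22 : (8⁻¹ : ℂ) * ((∑ i, (b i : ℂ) * z i) ^ 2 - 2 * ∑ i, ((b i : ℂ) * z i) ^ 2) = 0 := by
    simpa [mul_mul_apply, hcol, smul_mulVec, dotProduct_descartesForm_mulVec, lorentzForm]
      using congrFun (congrFun hdual 2) 2
  simp only [mul_pow] at h22
  linear_combination 8 * h22
end

section
/- Fix A ∈ ℂ, r > 0, and b̄ > 0 with r sin(π/k) = 1/b̄, so that the k circles of curvature b̄ centered at A + r e^{i(2πj/k + θ)}, j = 0,…,k-1, form a rotating family of chains of consecutively tangent congruent circles. Let C ∈ ℂ with |A + r e^{iφ} - C| ≠ 1/b̄ for all φ, and let b_j(θ) be the curvatures of the images of these circles under inversion in the unit circle centered at C. Then for every m with 1 ≤ m ≤ k-1, (1/k) ∑_{j=0}^{k-1} b_j(θ)^m = (1/2π) ∫_0^{2π} (b̄ |A + r e^{iφ} - C|^2 - 1/b̄)^m dφ, independent of θ. -/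
open Real intervalIntegral

/-!
On the circle `z = A + r e^{iφ}` the curvature `bb ‖z - C‖² - 1/bb` is a trigonometric polynomial
of degree one in `φ`, so its `m`-th power has degree `m`. Summed over `k` equally spaced angles,
`e^{inφ}` gives `0` for `0 < |n| < k` (a geometric sum over a nontrivial `k`-th root of unity),
exactly as its integral over the full circle does; hence the discrete and the continuous averages
agree on trigonometric polynomials of degree `< k`.
-/

open Complex ComplexConjugate Finset Submodule

def trigPoly (d : ℕ) : Submodule ℂ (ℝ → ℂ) :=
  span ℂ {g | ∃ n : ℤ, n.natAbs ≤ d ∧ g = fun φ : ℝ => cexp (n * φ * I)}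

namespace trigPoly

variable {d e : ℕ} {f g : ℝ → ℂ}

theorem exp_mem {n : ℤ} (hn : n.natAbs ≤ d) : (fun φ : ℝ => cexp (n * φ * I)) ∈ trigPoly d :=
  subset_span ⟨n, hn, rfl⟩

theorem const_mem (c : ℂ) : (fun _ : ℝ => c) ∈ trigPoly d := by
  convert smul_mem _ c (exp_mem (d := d) (n := 0) (Nat.zero_le d)) using 1
  funext φ
  simp

theorem continuous_of_mem (hg : g ∈ trigPoly d) : Continuous g := by
  induction hg using span_induction with
  | mem g hg => obtain ⟨n, -, rfl⟩ := hg; fun_prop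
  | zero => exact continuous_const
  | add f g _ _ hf hg => exact hf.add hg
  | smul c g _ hg => exact hg.const_smul c

theorem mul_mem (hf : f ∈ trigPoly d) (hg : g ∈ trigPoly e) : f * g ∈ trigPoly (d + e) := by
  have hle : trigPoly d * trigPoly e ≤ trigPoly (d + e) := by
    rw [trigPoly, trigPoly, span_mul_span]
    refine span_mono ?_
    rintro _ ⟨_, ⟨n, hn, rfl⟩, _, ⟨n', hn', rfl⟩, rfl⟩
    refine ⟨n + n', (Int.natAbs_add_le n n').trans (add_le_add hn hn'), funext fun φ => ?_⟩
    simp only [Pi.mul_apply, ← Complex.exp_add]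
    push_cast
    ring_nf
  exact hle (mul_mem_mul hf hg)

theorem pow_mem (hf : f ∈ trigPoly d) (m : ℕ) : f ^ m ∈ trigPoly (d * m) := by
  induction m with
  | zero => exact const_mem 1
  | succ m ih => rw [pow_succ, Nat.mul_succ]; exact mul_mem ih hf

end trigPoly

theorem norm_add_mul_exp_sq_mem_trigPoly (z w : ℂ) :
    (fun φ : ℝ => ((‖z + w * cexp (I * φ)‖ ^ 2 : ℝ) : ℂ)) ∈ trigPoly 1 := by
  have hconj (φ : ℝ) : conj (cexp (I * φ)) = cexp ((-1 : ℤ) * φ * I) := by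
    rw [← exp_conj, map_mul, conj_I, conj_ofReal]; push_cast; ring_nf
  have hexp (φ : ℝ) : cexp (I * φ) = cexp ((1 : ℤ) * φ * I) := by push_cast; ring_nf
  have hone (φ : ℝ) : cexp ((1 : ℤ) * φ * I) * cexp ((-1 : ℤ) * φ * I) = 1 := by
    rw [← Complex.exp_add]; push_cast; ring_nf; exact Complex.exp_zero
  have hexpand : (fun φ : ℝ => ((‖z + w * cexp (I * φ)‖ ^ 2 : ℝ) : ℂ)) =
      (fun _ => (‖z‖ ^ 2 + ‖w‖ ^ 2 : ℂ)) + (conj z * w) • (fun φ : ℝ => cexp ((1 : ℤ) * φ * I))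
        + (z * conj w) • (fun φ : ℝ => cexp ((-1 : ℤ) * φ * I)) := by
    funext φ
    simp only [Pi.add_apply, Pi.smul_apply, smul_eq_mul]
    rw [ofReal_pow, ← mul_conj' (z + _), ← mul_conj' z, ← mul_conj' w, map_add, map_mul, hconj,
      hexp]
    linear_combination (w * conj w) * hone φ
  rw [hexpand]
  exact add_mem (add_mem (trigPoly.const_mem _) (smul_mem _ _ (trigPoly.exp_mem (by norm_num))))
    (smul_mem _ _ (trigPoly.exp_mem (by norm_num)))

theorem integral_exp_int_mul (n : ℤ) :
    ∫ φ in (0 : ℝ)..2 * π, cexp (n * φ * I) = if n = 0 then 2 * π else 0 := by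
  split_ifs with hn
  · simp [hn]
  · have hc : (n * I : ℂ) ≠ 0 := mul_ne_zero (Int.cast_ne_zero.mpr hn) I_ne_zero
    simp_rw [mul_right_comm _ _ I]
    rw [integral_exp_mul_complex hc]
    have h2π : cexp (n * I * (2 * π)) = 1 := by
      rw [← exp_int_mul_two_pi_mul_I n]; ring_nf
    simp [h2π]

theorem sum_exp_int_mul_rotated_roots {k : ℕ} {n : ℤ} (hn : n.natAbs < k) (θ : ℝ) :
    ∑ j ∈ range k, cexp (n * (2 * π * j / k + θ : ℝ) * I) = if n = 0 then (k : ℂ) else 0 := by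
  split_ifs with hn0
  · simp [hn0]
  set ζ := cexp (2 * π * I / k)
  have hζ : IsPrimitiveRoot ζ k := isPrimitiveRoot_exp k (by omega)
  have hterm (j : ℕ) :
      cexp (n * (2 * π * j / k + θ : ℝ) * I) = cexp (n * θ * I) * (ζ ^ n) ^ j := by
    rw [← exp_int_mul, ← Complex.exp_nat_mul, ← Complex.exp_add]
    push_cast
    ring_nf
  have hne : ζ ^ n ≠ 1 := fun h =>
    hn0 (Int.eq_zero_of_dvd_of_natAbs_lt_natAbs ((hζ.zpow_eq_one_iff_dvd n).mp h) (by simpa))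
  have hpow : (ζ ^ n) ^ k = 1 := by
    rw [← zpow_natCast, ← zpow_mul, mul_comm, zpow_mul, zpow_natCast, hζ.pow_eq_one, one_zpow]
  simp_rw [hterm, ← mul_sum, geom_sum_eq hne, hpow, sub_self, zero_div, mul_zero]

namespace trigPoly

variable {k d : ℕ}

theorem average_rotated_roots_eq_average_integral (hdk : d < k) {g : ℝ → ℂ}
    (hg : g ∈ trigPoly d) (θ : ℝ) :
    (k : ℂ)⁻¹ * ∑ j ∈ range k, g (2 * π * j / k + θ : ℝ)
      = (2 * π : ℂ)⁻¹ * ∫ φ in (0 : ℝ)..2 * π, g φ := by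
  induction hg using span_induction with
  | mem g hg =>
    obtain ⟨n, hn, rfl⟩ := hg
    have hk : (k : ℂ) ≠ 0 := Nat.cast_ne_zero.mpr (by omega)
    rw [sum_exp_int_mul_rotated_roots (hn.trans_lt hdk), integral_exp_int_mul]
    split_ifs
    · push_cast; field_simp
    · simp
  | zero => simp
  | add f g hf hg ihf ihg =>
    rw [Pi.add_def, sum_add_distrib,
      integral_add ((continuous_of_mem hf).intervalIntegrable _ _)
        ((continuous_of_mem hg).intervalIntegrable _ _),
      mul_add, mul_add, ihf, ihg]
  | smul c g _ ih =>
    simp only [Pi.smul_apply, smul_eq_mul, ← mul_sum, integral_const_mul]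
    rw [mul_left_comm, ih, mul_left_comm]

theorem average_rotated_roots_eq_average_integral_real (hdk : d < k) {f : ℝ → ℝ}
    (hf : (fun φ => (f φ : ℂ)) ∈ trigPoly d) (θ : ℝ) :
    (k : ℝ)⁻¹ * ∑ j ∈ range k, f (2 * π * j / k + θ)
      = (2 * π)⁻¹ * ∫ φ in (0 : ℝ)..2 * π, f φ := by
  have h := average_rotated_roots_eq_average_integral hdk hf θ
  simp only [← ofReal_sum, intervalIntegral.integral_ofReal, ← ofReal_natCast, ← ofReal_inv,
    ← ofReal_ofNat, ← ofReal_mul, ofReal_inj] at h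
  exact h

end trigPoly

theorem steiner_chain_inversion_curvature_average_general
    (k : ℕ) (hk : 3 ≤ k) (A C : ℂ) (r bb : ℝ)
    (b : ℝ → ℕ → ℝ)
    (hb : ∀ θ j, b θ j
      = bb * (‖A + r * Complex.exp (Complex.I * (2 * Real.pi * j / k + θ)) - C‖) ^ 2
        - 1 / bb)
    (m : ℕ) (hm2 : m ≤ k - 1) (θ : ℝ) :
    (1 / (k : ℝ)) * ∑ j ∈ Finset.range k, (b θ j) ^ m
      = (1 / (2 * Real.pi)) *
          ∫ φ in (0:ℝ)..(2 * Real.pi),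
            (bb * (‖A + r * Complex.exp (Complex.I * φ) - C‖) ^ 2 - 1 / bb) ^ m := by
  set f : ℝ → ℝ := fun φ => bb * ‖A + r * cexp (I * φ) - C‖ ^ 2 - 1 / bb
  have hf : (fun φ => (f φ : ℂ)) ∈ trigPoly 1 := by
    convert add_mem (smul_mem _ (bb : ℂ) (norm_add_mul_exp_sq_mem_trigPoly (A - C) r))
      (trigPoly.const_mem (-(1 / bb : ℂ))) using 2 with φ
    simp [f, add_sub_right_comm]
    ring
  have hfm : (fun φ => ((f φ ^ m : ℝ) : ℂ)) ∈ trigPoly m := by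
    simpa only [Pi.pow_def, ofReal_pow, one_mul] using trigPoly.pow_mem hf m
  have hbf (j : ℕ) : b θ j = f (2 * π * j / k + θ) := by
    rw [hb]; simp only [f]; push_cast; rfl
  simp only [hbf]
  rw [one_div (k : ℝ), one_div (2 * π)]
  exact trigPoly.average_rotated_roots_eq_average_integral_real (by omega) hfm θ

/-- **Planar design argument for Steiner chains.** Let the `k` circles of curvature
`bb` centered at `A + r e^{i(2πj/k + θ)}` form a rotating family of chains of
consecutively tangent congruent circles (`r sin(π/k) = 1/bb`), none of them passing
through `C` after translation (`|A + r e^{iφ} - C| ≠ 1/bb` for all `φ`).  Then the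
average of the `m`-th powers of the curvatures `b_j(θ) = bb |A + r e^{i(2πj/k+θ)} - C|²
- 1/bb` of the images of these circles under inversion in the unit circle centered at
`C` equals, for `1 ≤ m ≤ k - 1`, the circle average
`(1/2π) ∫₀^{2π} (bb |A + r e^{iφ} - C|² - 1/bb)^m dφ`; in particular it is independent
of `θ`. -/
theorem steiner_chain_inversion_curvature_average
    (k : ℕ) (hk : 3 ≤ k) (A C : ℂ) (r bb : ℝ) (hr : 0 < r) (hbb : 0 < bb)
    (htan : r * Real.sin (Real.pi / k) = 1 / bb)
    (hreg : ∀ φ : ℝ, ‖A + r * Complex.exp (Complex.I * φ) - C‖ ≠ 1 / bb)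
    (b : ℝ → ℕ → ℝ)
    (hb : ∀ θ j, b θ j
      = bb * (‖A + r * Complex.exp (Complex.I * (2 * Real.pi * j / k + θ)) - C‖) ^ 2
        - 1 / bb)
    (m : ℕ) (hm1 : 1 ≤ m) (hm2 : m ≤ k - 1) (θ : ℝ) :
    (1 / (k : ℝ)) * ∑ j ∈ Finset.range k, (b θ j) ^ m
      = (1 / (2 * Real.pi)) *
          ∫ φ in (0:ℝ)..(2 * Real.pi),
            (bb * (‖A + r * Complex.exp (Complex.I * φ) - C‖) ^ 2 - 1 / bb) ^ m :=
  steiner_chain_inversion_curvature_average_general k hk A C r bb b hb m hm2 θ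
end
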